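/- arXiv:2405.04051 — 4 statements merged into one kernel-verified Lean document; each statement's English description precedes it below -/
import Mathlib

section
/- Let σ_r, Δ, η > 0, set σ_s² = σ_r² + Δ and σ̃_Δ² = σ_r²·Δ/σ_s². Let X be a random variable distributed as D_{ηℤ,σ_r}, let W be a Gaussian random variable with mean 0 and variance Δ independent of X, and let f_{Y'}(y) = ∑_{λ∈ηℤ} D_{ηℤ,σ_r}(λ)·f_{√Δ,λ}(y) denote the probability density of Y' = X + W. If ε_{ηℤ}(σ̃_Δ) ≤ 1/2, then the total variation distance satisfies 𝕍(f_{Y'}, f_{σ_s}) ≤ 2·ε_{ηℤ}(σ̃_Δ). -/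
open Real MeasureTheory

/-- The Gaussian density with standard deviation `σ` and mean `c`. -/
noncomputable def gauss (σ c x : ℝ) : ℝ :=
  (1 / (Real.sqrt (2 * Real.pi) * σ)) * Real.exp (-(x - c) ^ 2 / (2 * σ ^ 2))

/-- The flatness factor of the one-dimensional lattice `ηℤ` with parameter `σ`. -/
noncomputable def flatness (η σ : ℝ) : ℝ :=
  ⨆ x : ℝ, |η * (∑' k : ℤ, gauss σ 0 (x - k * η)) - 1|

lemma gauss_nonneg {σ : ℝ} (hσ : 0 < σ) (c x : ℝ) : 0 ≤ gauss σ c x := by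
  have h := Real.sqrt_pos.2 (by positivity : (0:ℝ) < 2 * Real.pi)
  unfold gauss; positivity

lemma gauss_pos {σ : ℝ} (hσ : 0 < σ) (c x : ℝ) : 0 < gauss σ c x := by
  have h := Real.sqrt_pos.2 (by positivity : (0:ℝ) < 2 * Real.pi)
  unfold gauss; positivity

lemma gauss_eq_pdf {σ : ℝ} (hσ : 0 < σ) (c : ℝ) :
    gauss σ c = ProbabilityTheory.gaussianPDFReal c ⟨σ ^ 2, sq_nonneg σ⟩ := by
  ext x
  unfold gauss ProbabilityTheory.gaussianPDFReal
  change 1 / (√(2 * π) * σ) * rexp (-(x - c) ^ 2 / (2 * σ ^ 2)) =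
    (√(2 * π * σ ^ 2))⁻¹ * rexp (-(x - c) ^ 2 / (2 * σ ^ 2))
  rw [show (2 * Real.pi * σ ^ 2) = (2 * Real.pi) * σ ^ 2 by ring,
    Real.sqrt_mul (by positivity) (σ ^ 2), Real.sqrt_sq hσ.le, one_div, mul_inv]

lemma integrable_gauss {σ : ℝ} (hσ : 0 < σ) (c : ℝ) : Integrable (gauss σ c) := by
  rw [gauss_eq_pdf hσ]; exact ProbabilityTheory.integrable_gaussianPDFReal _ _

lemma integral_gauss {σ : ℝ} (hσ : 0 < σ) (c : ℝ) : ∫ x, gauss σ c x = 1 := by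
  rw [gauss_eq_pdf hσ]
  refine ProbabilityTheory.integral_gaussianPDFReal_eq_one c ?_
  intro h
  have h2 : σ ^ 2 = 0 := congrArg NNReal.toReal h
  nlinarith

lemma gauss_shift (σ c x : ℝ) : gauss σ c x = gauss σ 0 (c - x) := by
  unfold gauss
  rw [show (c - x - 0) ^ 2 = (x - c) ^ 2 by ring]

lemma gauss_continuous (σ c : ℝ) : Continuous (gauss σ c) := by
  unfold gauss; fun_prop

lemma summable_exp_int {b : ℝ} (hb : 0 < b) :
    Summable fun k : ℤ => Real.exp (-(b * (k : ℝ) ^ 2)) := by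
  have hnat : Summable fun n : ℕ => Real.exp (-(b * (n : ℝ) ^ 2)) := by
    refine Summable.of_nonneg_of_le (fun n => Real.exp_nonneg _) (fun n => ?_)
      (summable_geometric_of_lt_one (Real.exp_nonneg (-b)) (Real.exp_lt_one_iff.2 (by linarith)))
    rw [← Real.exp_nat_mul]
    refine Real.exp_le_exp.2 ?_
    have h1 : (n : ℝ) ≤ (n : ℝ) ^ 2 := by exact_mod_cast Nat.le_self_pow two_ne_zero n
    nlinarith
  refine Summable.of_nat_of_neg (by simpa using hnat) (by simpa using hnat)

lemma summable_gauss {σ η : ℝ} (hσ : 0 < σ) (hη : 0 < η) (x : ℝ) :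
    Summable fun k : ℤ => gauss σ 0 (x - k * η) := by
  have hb : (0:ℝ) < η ^ 2 / (4 * σ ^ 2) := by positivity
  have hsq := Real.sqrt_pos.2 (by positivity : (0:ℝ) < 2 * Real.pi)
  refine Summable.of_nonneg_of_le (fun k => gauss_nonneg hσ _ _) (fun k => ?_)
    (((summable_exp_int hb).mul_left
      ((1 / (Real.sqrt (2 * Real.pi) * σ)) * Real.exp (x ^ 2 / (2 * σ ^ 2)))))
  unfold gauss
  rw [mul_assoc, ← Real.exp_add]
  refine mul_le_mul_of_nonneg_left ?_ (by positivity)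
  refine Real.exp_le_exp.2 ?_
  have hkey : (x ^ 2 / (2 * σ ^ 2) + -(η ^ 2 / (4 * σ ^ 2) * (k:ℝ) ^ 2))
      - (-(x - (k:ℝ) * η - 0) ^ 2 / (2 * σ ^ 2)) = (2 * x - (k:ℝ) * η) ^ 2 / (4 * σ ^ 2) := by
    field_simp
    ring
  have hnn : (0:ℝ) ≤ (2 * x - (k:ℝ) * η) ^ 2 / (4 * σ ^ 2) :=
    div_nonneg (sq_nonneg _) (by positivity)
  linarith

lemma tsum_gauss_le {σ η : ℝ} (hσ : 0 < σ) (hη : 0 < η) :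
    ∃ M : ℝ, ∀ x : ℝ, (∑' k : ℤ, gauss σ 0 (x - k * η)) ≤ M := by
  have hb : (0:ℝ) < η ^ 2 / (4 * σ ^ 2) := by positivity
  have hsq := Real.sqrt_pos.2 (by positivity : (0:ℝ) < 2 * Real.pi)
  set C : ℝ := 1 / (Real.sqrt (2 * Real.pi) * σ) with hC
  refine ⟨C * Real.exp (η ^ 2 / (2 * σ ^ 2))
    * ∑' k : ℤ, Real.exp (-(η ^ 2 / (4 * σ ^ 2) * (k:ℝ) ^ 2)), fun x => ?_⟩
  -- first reduce to the case x ∈ [0, η]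
  have key : ∀ x : ℝ, 0 ≤ x → x ≤ η → (∑' k : ℤ, gauss σ 0 (x - k * η)) ≤
      C * Real.exp (η ^ 2 / (2 * σ ^ 2))
        * ∑' k : ℤ, Real.exp (-(η ^ 2 / (4 * σ ^ 2) * (k:ℝ) ^ 2)) := by
    intro x hx0 hx1
    rw [← tsum_mul_left]
    refine Summable.tsum_le_tsum (fun k => ?_) (summable_gauss hσ hη x)
      ((summable_exp_int hb).mul_left _)
    unfold gauss
    rw [mul_assoc, ← Real.exp_add]
    refine mul_le_mul_of_nonneg_left ?_ (by positivity)
    refine Real.exp_le_exp.2 ?_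
    have hkey : (η ^ 2 / (2 * σ ^ 2) + -(η ^ 2 / (4 * σ ^ 2) * (k:ℝ) ^ 2))
        - (-(x - (k:ℝ) * η - 0) ^ 2 / (2 * σ ^ 2))
        = ((η * k - 2 * x) ^ 2 + 2 * (η - x) * (η + x)) / (4 * σ ^ 2) := by
      field_simp
      ring
    have hnn : (0:ℝ) ≤ ((η * k - 2 * x) ^ 2 + 2 * (η - x) * (η + x)) / (4 * σ ^ 2) := by
      have h1 : (0:ℝ) ≤ 2 * (η - x) * (η + x) := by nlinarith
      positivity
    linarith
  set n : ℤ := ⌊x / η⌋ with hn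
  have h1 : (n : ℝ) * η ≤ x := by
    rw [← le_div_iff₀ hη]; exact Int.floor_le _
  have h2 : x ≤ ((n : ℝ) + 1) * η := by
    rw [← div_le_iff₀ hη]; exact (Int.lt_floor_add_one _).le
  have hper : (∑' k : ℤ, gauss σ 0 (x - k * η))
      = ∑' k : ℤ, gauss σ 0 ((x - n * η) - k * η) := by
    rw [← (Equiv.addRight n).tsum_eq (fun k : ℤ => gauss σ 0 (x - k * η))]
    refine tsum_congr fun k => ?_
    simp only [Equiv.coe_addRight]
    push_cast
    ring_nf
  rw [hper]
  exact key _ (by linarith) (by nlinarith)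

lemma abs_flat_le {σ η : ℝ} (hσ : 0 < σ) (hη : 0 < η) (x : ℝ) :
    |η * (∑' k : ℤ, gauss σ 0 (x - k * η)) - 1| ≤ flatness η σ := by
  obtain ⟨M, hM⟩ := tsum_gauss_le hσ hη
  refine le_ciSup (f := fun x : ℝ => |η * (∑' k : ℤ, gauss σ 0 (x - k * η)) - 1|) ?_ x
  refine ⟨η * M + 1, ?_⟩
  rintro y ⟨x, rfl⟩
  have h0 : 0 ≤ ∑' k : ℤ, gauss σ 0 (x - k * η) := tsum_nonneg fun k => gauss_nonneg hσ _ _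
  have h1 := hM x
  rw [abs_le]
  constructor <;> nlinarith [mul_le_mul_of_nonneg_left h1 hη.le]

lemma flatness_nonneg {σ η : ℝ} (hσ : 0 < σ) (hη : 0 < η) : 0 ≤ flatness η σ :=
  (abs_nonneg _).trans (abs_flat_le hσ hη 0)

lemma gauss_prod {σr Δ σs σtil : ℝ} (hσr : 0 < σr) (hΔ : 0 < Δ) (hσs : 0 < σs)
    (hσs2 : σs ^ 2 = σr ^ 2 + Δ) (hσtil : 0 < σtil) (hσtil2 : σtil ^ 2 = σr ^ 2 * Δ / σs ^ 2)
    (y l : ℝ) :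
    gauss σr 0 l * gauss (Real.sqrt Δ) l y
      = gauss σs 0 y * gauss σtil (σr ^ 2 * y / σs ^ 2) l := by
  have hΔ' : Real.sqrt Δ ^ 2 = Δ := Real.sq_sqrt hΔ.le
  have hsΔ : 0 < Real.sqrt Δ := Real.sqrt_pos.2 hΔ
  have hst : σs * σtil = σr * Real.sqrt Δ := by
    have h1 : (σs * σtil) ^ 2 = (σr * Real.sqrt Δ) ^ 2 := by
      rw [mul_pow, mul_pow, hΔ', hσtil2]
      field_simp
    exact (sq_eq_sq₀ (by positivity) (by positivity)).1 h1
  unfold gauss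
  rw [mul_mul_mul_comm, ← Real.exp_add, mul_mul_mul_comm, ← Real.exp_add]
  have h2π := Real.sqrt_pos.2 (by positivity : (0:ℝ) < 2 * Real.pi)
  congr 1
  · field_simp
    linear_combination hst
  · congr 1
    rw [hΔ', hσtil2, hσs2]
    have h1 : σr ^ 2 + Δ ≠ 0 := by positivity
    field_simp
    ring
/-- the TV distance between the density of `Y' = X + W` (with `X` discrete
Gaussian over `ηℤ` and `W` Gaussian noise of variance `Δ`) and the Gaussian density
`f_{σ_s}` is at most twice the flatness factor `ε_{ηℤ}(σ̃_Δ)`. -/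
theorem stmt0 (σr Δ η σs σtil : ℝ) (hσr : 0 < σr) (hΔ : 0 < Δ) (hη : 0 < η)
    (hσs : 0 < σs) (hσs2 : σs ^ 2 = σr ^ 2 + Δ)
    (hσtil : 0 < σtil) (hσtil2 : σtil ^ 2 = σr ^ 2 * Δ / σs ^ 2)
    (hflat : flatness η σtil ≤ 1 / 2) :
    (1 / 2) * ∫ y : ℝ,
      |(∑' k : ℤ, (gauss σr 0 (η * k) / ∑' j : ℤ, gauss σr 0 (η * j))
          * gauss (Real.sqrt Δ) (η * k) y) - gauss σs 0 y|
      ≤ 2 * flatness η σtil := by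
  have hsΔ : 0 < Real.sqrt Δ := Real.sqrt_pos.2 hΔ
  set ε := flatness η σtil with hε
  have hε0 : 0 ≤ ε := flatness_nonneg hσtil hη
  have hε12 : ε ≤ 1 / 2 := hflat
  set S : ℝ → ℝ := fun x => ∑' k : ℤ, gauss σtil 0 (x - k * η) with hS
  set Z : ℝ := ∑' j : ℤ, gauss σr 0 (η * j) with hZ
  set g : ℝ → ℝ := gauss σs 0 with hg
  set c : ℝ → ℝ := fun y => σr ^ 2 * y / σs ^ 2 with hc
  -- pointwise flatness bounds
  have hSbound : ∀ x, |η * S x - 1| ≤ ε := fun x => abs_flat_le hσtil hη x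
  have hSub : ∀ x, η * S x ≤ 1 + ε := fun x => by
    have := (abs_le.1 (hSbound x)).2; linarith
  have hSlb : ∀ x, 1 - ε ≤ η * S x := fun x => by
    have := (abs_le.1 (hSbound x)).1; linarith
  have hSub' : ∀ x, S x ≤ (1 + ε) / η := fun x => by
    rw [le_div_iff₀ hη]; have := hSub x; linarith [mul_comm η (S x)]
  -- summability of Z
  have hsumZ : Summable fun j : ℤ => gauss σr 0 (η * j) := by
    refine (summable_gauss hσr hη 0).congr fun k => ?_
    unfold gauss
    rw [show (0 - (k:ℝ) * η - 0) ^ 2 = (η * k - 0) ^ 2 by ring]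
  have hZpos : 0 < Z := Summable.tsum_pos hsumZ (fun j => gauss_nonneg hσr _ _) 0 (gauss_pos hσr _ _)
  -- the key product identity
  have hprod : ∀ (y : ℝ) (k : ℤ), gauss σr 0 (η * k) * gauss (Real.sqrt Δ) (η * k) y
      = g y * gauss σtil 0 (c y - k * η) := by
    intro y k
    rw [gauss_prod hσr hΔ hσs hσs2 hσtil hσtil2 y (η * k), hg, hc]
    congr 1
    rw [gauss_shift]
    congr 1
    ring
  -- rewriting the density of Y'
  have hfY : ∀ y, (∑' k : ℤ, (gauss σr 0 (η * k) / Z) * gauss (Real.sqrt Δ) (η * k) y)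
      = g y * S (c y) / Z := by
    intro y
    have h1 : ∀ k : ℤ, (gauss σr 0 (η * k) / Z) * gauss (Real.sqrt Δ) (η * k) y
        = g y * gauss σtil 0 (c y - k * η) / Z := fun k => by
      rw [div_mul_eq_mul_div, hprod y k]
    rw [tsum_congr h1, tsum_div_const, tsum_mul_left]
  -- integral of the mixture equals Z
  have hFint : ∀ k : ℤ, Integrable (fun y => gauss σr 0 (η * k) * gauss (Real.sqrt Δ) (η * k) y) :=
    fun k => (integrable_gauss hsΔ (η * k)).const_mul _
  have hrw : ∀ y, g y * S (c y)
      = ∑' k : ℤ, gauss σr 0 (η * k) * gauss (Real.sqrt Δ) (η * k) y := by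
    intro y
    rw [hS]
    simp only
    rw [← tsum_mul_left]
    exact tsum_congr fun k => (hprod y k).symm
  have hZint : ∫ y : ℝ, g y * S (c y) = Z := by
    rw [integral_congr_ae (ae_of_all _ hrw)]
    rw [← MeasureTheory.integral_tsum_of_summable_integral_norm hFint ?hnorm]
    · rw [hZ]
      refine tsum_congr fun k => ?_
      rw [integral_const_mul, integral_gauss hsΔ, mul_one]
    case hnorm =>
      refine hsumZ.congr fun k => ?_
      have hn : ∀ y : ℝ, ‖gauss σr 0 (η * k) * gauss (Real.sqrt Δ) (η * k) y‖
          = gauss σr 0 (η * k) * gauss (Real.sqrt Δ) (η * k) y := fun y =>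
        Real.norm_of_nonneg (mul_nonneg (gauss_nonneg hσr _ _) (gauss_nonneg hsΔ _ _))
      rw [integral_congr_ae (ae_of_all _ hn), integral_const_mul,
        integral_gauss hsΔ, mul_one]
  -- measurability and integrability of g * S ∘ c
  have hmeasS : Measurable fun y => S (c y) := by
    have h2 : (fun y => S (c y))
        = fun y => (∑' k : ℤ, ENNReal.ofReal (gauss σtil 0 (c y - k * η))).toReal := by
      funext y
      rw [← ENNReal.ofReal_tsum_of_nonneg (fun k => gauss_nonneg hσtil _ _)
        (summable_gauss hσtil hη (c y)),
        ENNReal.toReal_ofReal (tsum_nonneg fun k => gauss_nonneg hσtil _ _)]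
    rw [h2]
    refine Measurable.ennreal_toReal (Measurable.ennreal_tsum fun k => ?_)
    exact ENNReal.measurable_ofReal.comp
      (((gauss_continuous σtil 0).measurable).comp (by fun_prop))
  have hGSint : Integrable (fun y => g y * S (c y)) := by
    refine Integrable.mono' (((integrable_gauss hσs 0).const_mul ((1 + ε) / η)))
      (((gauss_continuous σs 0).measurable.mul hmeasS).aestronglyMeasurable)
      (ae_of_all _ fun y => ?_)
    have hgy : 0 ≤ g y := gauss_nonneg hσs _ _
    have hSy : 0 ≤ S (c y) := tsum_nonneg fun k => gauss_nonneg hσtil _ _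
    rw [Real.norm_of_nonneg (mul_nonneg hgy hSy)]
    calc g y * S (c y) ≤ g y * ((1 + ε) / η) :=
          mul_le_mul_of_nonneg_left (hSub' (c y)) hgy
      _ = (1 + ε) / η * g y := mul_comm _ _
  -- bounds on Z
  have hZub : Z ≤ (1 + ε) / η := by
    rw [← hZint]
    calc ∫ y : ℝ, g y * S (c y) ≤ ∫ y : ℝ, (1 + ε) / η * g y := by
          refine integral_mono_of_nonneg (ae_of_all _ fun y =>
            mul_nonneg (gauss_nonneg hσs _ _) (tsum_nonneg fun k => gauss_nonneg hσtil _ _))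
            ((integrable_gauss hσs 0).const_mul _) (ae_of_all _ fun y => ?_)
          exact le_trans (mul_le_mul_of_nonneg_left (hSub' (c y)) (gauss_nonneg hσs _ _))
            (le_of_eq (mul_comm _ _))
      _ = (1 + ε) / η := by
          rw [integral_const_mul, integral_gauss hσs, mul_one]
  have hZlb : (1 - ε) / η ≤ Z := by
    rw [← hZint]
    calc (1 - ε) / η = ∫ y : ℝ, (1 - ε) / η * g y := by
          rw [integral_const_mul, integral_gauss hσs, mul_one]
      _ ≤ ∫ y : ℝ, g y * S (c y) := by
          refine integral_mono_of_nonneg (ae_of_all _ fun y =>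
            mul_nonneg (div_nonneg (by linarith) hη.le) (gauss_nonneg hσs _ _))
            hGSint (ae_of_all _ fun y => ?_)
          have hSlb' : (1 - ε) / η ≤ S (c y) := by
            rw [div_le_iff₀ hη]; have := hSlb (c y); linarith [mul_comm η (S (c y))]
          calc (1 - ε) / η * g y = g y * ((1 - ε) / η) := mul_comm _ _
            _ ≤ g y * S (c y) := mul_le_mul_of_nonneg_left hSlb' (gauss_nonneg hσs _ _)
  have hZabs : |η * Z - 1| ≤ ε := by
    have h1 : 1 - ε ≤ Z * η := (div_le_iff₀ hη).1 hZlb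
    have h2 : Z * η ≤ 1 + ε := (le_div_iff₀ hη).1 hZub
    rw [abs_le]
    constructor <;> nlinarith [mul_comm η Z]
  -- pointwise bound on the TV integrand
  have hpt : ∀ y : ℝ, |(∑' k : ℤ, (gauss σr 0 (η * k) / Z) * gauss (Real.sqrt Δ) (η * k) y)
      - g y| ≤ 4 * ε * g y := by
    intro y
    rw [hfY y]
    have hgy : 0 ≤ g y := gauss_nonneg hσs _ _
    have hSy := hSbound (c y)
    have habs : |S (c y) - Z| ≤ 4 * ε * Z := by
      have h1 : η * |S (c y) - Z| = |(η * S (c y) - 1) - (η * Z - 1)| := by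
        rw [show (η * S (c y) - 1) - (η * Z - 1) = η * (S (c y) - Z) by ring, abs_mul,
          abs_of_pos hη]
      have h2 : |(η * S (c y) - 1) - (η * Z - 1)| ≤ ε + ε := by
        rw [sub_eq_add_neg]
        refine (abs_add_le _ _).trans ?_
        rw [abs_neg]
        exact add_le_add hSy hZabs
      have h4 : η * |S (c y) - Z| ≤ η * (4 * ε * Z) := by
        have h5 : 1 - ε ≤ η * Z := by linarith [(abs_le.1 hZabs).1]
        nlinarith
      exact le_of_mul_le_mul_left h4 hη
    have hrw2 : g y * S (c y) / Z - g y = g y * (S (c y) - Z) / Z := by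
      field_simp
    rw [hrw2, abs_div, abs_mul, abs_of_nonneg hgy, abs_of_pos hZpos, div_le_iff₀ hZpos]
    calc g y * |S (c y) - Z| ≤ g y * (4 * ε * Z) := mul_le_mul_of_nonneg_left habs hgy
      _ = 4 * ε * g y * Z := by ring
  -- conclude
  have hint : ∫ y : ℝ, |(∑' k : ℤ, (gauss σr 0 (η * k) / Z) * gauss (Real.sqrt Δ) (η * k) y)
      - g y| ≤ ∫ y : ℝ, 4 * ε * g y :=
    integral_mono_of_nonneg (ae_of_all _ fun y => abs_nonneg _)
      ((integrable_gauss hσs 0).const_mul _) (ae_of_all _ hpt)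
  have hval : ∫ y : ℝ, 4 * ε * g y = 4 * ε := by
    rw [integral_const_mul, integral_gauss hσs, mul_one]
  rw [hval] at hint
  linarith
end

section
/- For all η > 0 and σ > 0 such that exp(−6π²σ²/η²) ≤ 1/2, the flatness factor of the lattice ηℤ satisfies ε_{ηℤ}(σ) ≤ 4·exp(−2π²σ²/η²). -/
open Real

/-- Poisson summation for the shifted Gaussian. -/
lemma gauss_poisson (η σ : ℝ) (hη : 0 < η) (hσ : 0 < σ) (x : ℝ) :
    ((η * (∑' k : ℤ, gauss σ 0 (x - k * η)) : ℝ) : ℂ)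
      = ∑' n : ℤ, Complex.exp (-(π:ℂ) * ((2*π*σ^2/η^2 : ℝ):ℂ) * (n:ℂ)^2
          + 2 * (π:ℂ) * (Complex.I * ((x/η : ℝ):ℂ)) * (n:ℂ)) := by
  have hπ := Real.pi_pos
  set a : ℝ := 2*π*σ^2/η^2 with ha_def
  have ha : 0 < a := by positivity
  have ha' : 0 < ((a:ℂ)).re := by simpa using ha
  set b : ℂ := Complex.I * ((x/η : ℝ):ℂ) with hb_def
  rw [Complex.tsum_exp_neg_quadratic ha' b]
  have hterm : ∀ n : ℤ, Complex.exp (-(π:ℂ) / (a:ℂ) * ((n:ℂ) + Complex.I * b)^2)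
      = ((Real.exp (-(x - n * η) ^ 2 / (2 * σ ^ 2)) : ℝ) : ℂ) := by
    intro n
    rw [Complex.ofReal_exp]
    congr 1
    have hb : Complex.I * b = ((-(x/η) : ℝ):ℂ) := by
      rw [hb_def, ← mul_assoc, Complex.I_mul_I]; push_cast; ring
    rw [hb, ha_def]
    have hη' : (η:ℂ) ≠ 0 := Complex.ofReal_ne_zero.mpr hη.ne'
    have hσ' : (σ:ℂ) ≠ 0 := Complex.ofReal_ne_zero.mpr hσ.ne'
    have hπ' : (π:ℂ) ≠ 0 := Complex.ofReal_ne_zero.mpr hπ.ne'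
    push_cast
    field_simp
    ring
  rw [tsum_congr hterm, ← Complex.ofReal_tsum]
  have hsa : Real.sqrt a = Real.sqrt (2*π) * σ / η := by
    rw [ha_def, show 2*π*σ^2/η^2 = (Real.sqrt (2*π)*σ/η)^2 by
      rw [div_pow, mul_pow, Real.sq_sqrt (by positivity)]]
    exact Real.sqrt_sq (by positivity)
  have hsq : ((a:ℂ))^(1/2:ℂ) = ((Real.sqrt a : ℝ):ℂ) := by
    rw [Real.sqrt_eq_rpow, Complex.ofReal_cpow ha.le]; norm_num
  rw [hsq]
  simp only [gauss, sub_zero]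
  rw [tsum_mul_left]
  rw [show (1 : ℂ) / ((Real.sqrt a : ℝ):ℂ) = (((1 / Real.sqrt a : ℝ)):ℂ) by push_cast; ring,
    ← Complex.ofReal_mul, Complex.ofReal_inj]
  rw [hsa]
  have h2π : (0:ℝ) < Real.sqrt (2*π) := Real.sqrt_pos.mpr (by positivity)
  field_simp

/-- if `exp(−6π²σ²/η²) ≤ 1/2`, then
`ε_{ηℤ}(σ) ≤ 4·exp(−2π²σ²/η²)`. -/
theorem stmt1 (η σ : ℝ) (hη : 0 < η) (hσ : 0 < σ)
    (h : Real.exp (-(6 * π ^ 2 * σ ^ 2 / η ^ 2)) ≤ 1 / 2) :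
    flatness η σ ≤ 4 * Real.exp (-(2 * π ^ 2 * σ ^ 2 / η ^ 2)) := by
  have hπ := Real.pi_pos
  set a : ℝ := 2*π*σ^2/η^2 with ha_def
  have ha : 0 < a := by positivity
  set q : ℝ := Real.exp (-(2 * π ^ 2 * σ ^ 2 / η ^ 2)) with hq_def
  have hq_eq : q = Real.exp (-(π*a)) := by rw [hq_def, ha_def]; ring_nf
  have hq0 : 0 < q := Real.exp_pos _
  have hq1 : q < 1 := by
    have : Real.exp (-(π*a)) < Real.exp 0 := Real.exp_lt_exp.mpr (by nlinarith)
    rw [hq_eq]; simpa using this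
  have hq3 : q^3 ≤ 1/2 := by
    rw [hq_def, ← Real.exp_nat_mul]
    convert h using 2
    push_cast; ring
  have hq31 : q^3 < 1 := pow_lt_one₀ hq0.le hq1 three_ne_zero
  -- summability of the theta coefficients
  have hπa : 0 < π * a := by positivity
  have hnat : Summable (fun n : ℕ => Real.exp (-(π*a)*(n:ℝ)^2)) := by
    refine Summable.of_nonneg_of_le (fun n => (Real.exp_pos _).le) (fun n => ?_)
      (summable_geometric_of_lt_one hq0.le hq1)
    rw [hq_eq, ← Real.exp_nat_mul, Real.exp_le_exp]
    have hn : (n:ℝ) ≤ (n:ℝ)^2 := by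
      exact_mod_cast Nat.le_self_pow two_ne_zero n
    nlinarith
  have hsumZ : Summable (fun n : ℤ => Real.exp (-(π*a)*(n:ℝ)^2)) := by
    apply Summable.of_nat_of_neg
    · simpa using hnat
    · simpa using hnat
  -- pointwise bound
  have key : ∀ x : ℝ, |η * (∑' k : ℤ, gauss σ 0 (x - k * η)) - 1| ≤ 4 * q := by
    intro x
    set b : ℂ := Complex.I * ((x/η : ℝ):ℂ) with hb_def
    set F : ℤ → ℂ := fun n => Complex.exp (-(π:ℂ) * ((a : ℝ):ℂ) * (n:ℂ)^2
        + 2 * (π:ℂ) * b * (n:ℂ)) with hF_def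
    have hnorm : ∀ n : ℤ, ‖F n‖ = Real.exp (-(π*a)*(n:ℝ)^2) := by
      intro n
      have harg : (-(π:ℂ) * ((a : ℝ):ℂ) * (n:ℂ)^2 + 2 * (π:ℂ) * b * (n:ℂ))
          = ((-(π*a)*(n:ℝ)^2 : ℝ) : ℂ) + ((2*π*(x/η)*(n:ℝ) : ℝ) : ℂ) * Complex.I := by
        rw [hb_def]; push_cast; ring
      rw [hF_def]
      simp only [harg, Complex.exp_add, norm_mul]
      rw [show ‖Complex.exp ((-(π*a)*(n:ℝ)^2 : ℝ) : ℂ)‖ = Real.exp (-(π*a)*(n:ℝ)^2) from by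
          rw [Complex.norm_exp, Complex.ofReal_re],
        show ‖Complex.exp (((2*π*(x/η)*(n:ℝ) : ℝ) : ℂ) * Complex.I)‖ = 1 from by
          rw [Complex.norm_exp]; simp, mul_one]
    have hsumC : Summable F := by
      apply Summable.of_norm
      simpa only [hnorm] using hsumZ
    have hpoisson := gauss_poisson η σ hη hσ x
    rw [← ha_def, ← hb_def, ← hF_def] at hpoisson
    have hF0 : F 0 = 1 := by simp [hF_def]
    have split : ∑' n : ℤ, F n = 1 + ∑' n : ℤ, ite (n = 0) 0 (F n) := by
      rw [← hF0]; exact Summable.tsum_eq_add_tsum_ite hsumC 0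
    set G : ℤ → ℝ := fun n => if n = 0 then 0 else Real.exp (-(π*a)*(n:ℝ)^2) with hG_def
    have hGsum : Summable G := by
      refine Summable.of_nonneg_of_le (fun n => ?_) (fun n => ?_) hsumZ <;>
        simp only [hG_def] <;> split <;> simp [Real.exp_pos, (Real.exp_pos _).le]
    have hnorm_ite : ∀ n : ℤ, ‖ite (n = 0) (0:ℂ) (F n)‖ = G n := by
      intro n; simp only [hG_def]; split <;> simp [hnorm]
    -- bound the tail sum
    have hle : ∀ n : ℕ, Real.exp (-(π*a)*((n:ℝ)+1)^2) ≤ q * (q^3)^n := by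
      intro n
      have e1 : q * (q^3)^n = q ^ (3*n+1) := by ring
      have e2 : q ^ (3*n+1) = Real.exp (((3*n+1 : ℕ) : ℝ) * (-(π*a))) := by
        rw [Real.exp_nat_mul, hq_eq]
      rw [e1, e2, Real.exp_le_exp]
      have hn : (n:ℝ) ≤ (n:ℝ)^2 := by exact_mod_cast Nat.le_self_pow two_ne_zero n
      push_cast
      nlinarith
    have hgeom : Summable (fun n : ℕ => q * (q^3)^n) :=
      (summable_geometric_of_lt_one (by positivity) hq31).mul_left q
    have htsum_geom : ∑' n : ℕ, q * (q^3)^n = q * (1 - q^3)⁻¹ := by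
      rw [tsum_mul_left, tsum_geometric_of_lt_one (by positivity) hq31]
    have hshift : Summable (fun n : ℕ => Real.exp (-(π*a)*((n:ℝ)+1)^2)) :=
      Summable.of_nonneg_of_le (fun n => (Real.exp_pos _).le) hle hgeom
    have hbound : ∑' n : ℕ, Real.exp (-(π*a)*((n:ℝ)+1)^2) ≤ q * (1 - q^3)⁻¹ := by
      rw [← htsum_geom]; exact Summable.tsum_le_tsum hle hshift hgeom
    have hGplus : (fun n : ℕ => G ((n:ℤ) + 1)) = fun n : ℕ => Real.exp (-(π*a)*((n:ℝ)+1)^2) := by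
      funext n
      have : ((n:ℤ) + 1) ≠ 0 := by positivity
      simp only [hG_def, this, if_false]
      norm_num
    have hGneg : (fun n : ℕ => G (-((n:ℤ) + 1))) = fun n : ℕ => Real.exp (-(π*a)*((n:ℝ)+1)^2) := by
      funext n
      have : (-((n:ℤ) + 1)) ≠ 0 := by
        simp only [neg_ne_zero]; positivity
      simp only [hG_def, this, if_false]
      push_cast
      ring_nf
    have hGsplit : ∑' n : ℤ, G n = (∑' n : ℕ, G ((n:ℤ)+1)) + G 0 + ∑' n : ℕ, G (-((n:ℤ)+1)) := by
      refine tsum_of_add_one_of_neg_add_one ?_ ?_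
      · rw [hGplus]; exact hshift
      · rw [hGneg]; exact hshift
    have hG0 : G 0 = 0 := by simp [hG_def]
    have hinv : (1 - q^3)⁻¹ ≤ 2 := by
      rw [show (2:ℝ) = (1/2)⁻¹ by norm_num]
      apply inv_anti₀
      · norm_num
      · linarith
    calc |η * (∑' k : ℤ, gauss σ 0 (x - k * η)) - 1|
        = ‖((η * (∑' k : ℤ, gauss σ 0 (x - k * η)) - 1 : ℝ) : ℂ)‖ := by
          rw [Complex.norm_real, Real.norm_eq_abs]
      _ = ‖∑' n : ℤ, ite (n = 0) (0:ℂ) (F n)‖ := by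
          rw [Complex.ofReal_sub, Complex.ofReal_one, hpoisson, split]; ring_nf
      _ ≤ ∑' n : ℤ, ‖ite (n = 0) (0:ℂ) (F n)‖ := by
          refine norm_tsum_le_tsum_norm ?_
          simpa only [hnorm_ite] using hGsum
      _ = ∑' n : ℤ, G n := tsum_congr hnorm_ite
      _ = (∑' n : ℕ, G ((n:ℤ)+1)) + G 0 + ∑' n : ℕ, G (-((n:ℤ)+1)) := hGsplit
      _ ≤ q * (1 - q^3)⁻¹ + 0 + q * (1 - q^3)⁻¹ := by
          rw [hG0, hGplus, hGneg]
          gcongr <;> exact hbound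
      _ ≤ 4 * q := by nlinarith
  exact ciSup_le key
end

section
/- For all η > 0 and σ > 0, the flatness factor of the lattice ηℤ equals the theta series of the dual lattice minus one: ε_{ηℤ}(σ) = ∑_{m∈ℤ, m≠0} exp(−2π²σ²m²/η²). -/
open Real

lemma summable_exp_neg_c_int_sq {c : ℝ} (hc : 0 < c) :
    Summable fun n : ℤ => Real.exp (-c * (n : ℝ) ^ 2) := by
  have hgeo : Summable fun n : ℕ => Real.exp (-c) ^ n :=
    summable_geometric_of_lt_one (Real.exp_pos _).le
      (Real.exp_lt_one_iff.mpr (neg_lt_zero.mpr hc))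
  have key : Summable fun n : ℕ => Real.exp (-c * (n : ℝ) ^ 2) := by
    refine Summable.of_nonneg_of_le (fun n => (Real.exp_pos _).le) (fun n => ?_) hgeo
    rw [← Real.exp_nat_mul]
    apply Real.exp_le_exp.mpr
    have hn : (0 : ℝ) ≤ (n : ℝ) := Nat.cast_nonneg n
    have h2 : (n : ℝ) ≤ (n : ℝ) ^ 2 := by
      rcases Nat.eq_zero_or_pos n with h | h
      · simp [h]
      · have : (1 : ℝ) ≤ (n : ℝ) := by exact_mod_cast h
        nlinarith
    nlinarith
  apply Summable.of_nat_of_neg <;> simpa using key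

/-- Poisson summation for the periodized Gaussian. -/
lemma key_id (η σ : ℝ) (hη : 0 < η) (hσ : 0 < σ) (x : ℝ) :
    ((η * (∑' k : ℤ, gauss σ 0 (x - k * η)) : ℝ) : ℂ)
      = ∑' n : ℤ, Complex.exp (-(π : ℂ) * ((2 * π * σ ^ 2 / η ^ 2 : ℝ) : ℂ) * (n : ℂ) ^ 2
          + 2 * (π : ℂ) * (-Complex.I * ((x : ℂ) / (η : ℂ))) * (n : ℂ)) := by
  have hπ := Real.pi_pos
  set A : ℝ := 2 * π * σ ^ 2 / η ^ 2 with hA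
  have hA0 : 0 < A := by positivity
  have jac := Complex.tsum_exp_neg_quadratic (a := (A : ℂ))
    (by simpa using hA0) (-Complex.I * ((x : ℂ) / (η : ℂ)))
  -- rewrite the RHS of jac as a real sum
  have hterm : ∀ n : ℤ, (-(π : ℂ) / (A : ℂ)
      * ((n : ℂ) + Complex.I * (-Complex.I * ((x : ℂ) / (η : ℂ)))) ^ 2)
      = ((-π / A * ((n : ℝ) + x / η) ^ 2 : ℝ) : ℂ) := by
    intro n
    have hI : Complex.I * (-Complex.I * ((x : ℂ) / (η : ℂ))) = ((x / η : ℝ) : ℂ) := by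
      have : Complex.I * (-Complex.I * ((x : ℂ) / (η : ℂ)))
          = -(Complex.I * Complex.I) * ((x : ℂ) / (η : ℂ)) := by ring
      rw [this, Complex.I_mul_I]
      push_cast
      ring
    rw [hI]
    push_cast
    ring
  have hsum2 : (∑' n : ℤ, Complex.exp (-(π : ℂ) / (A : ℂ)
        * ((n : ℂ) + Complex.I * (-Complex.I * ((x : ℂ) / (η : ℂ)))) ^ 2))
      = ((∑' n : ℤ, Real.exp (-π / A * ((n : ℝ) + x / η) ^ 2) : ℝ) : ℂ) := by
    rw [Complex.ofReal_tsum]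
    exact tsum_congr fun n => by rw [hterm n, Complex.ofReal_exp]
  -- reindex the real sum
  have hreal : (∑' n : ℤ, Real.exp (-π / A * ((n : ℝ) + x / η) ^ 2))
      = ∑' k : ℤ, Real.exp (-(x - k * η) ^ 2 / (2 * σ ^ 2)) := by
    rw [← (Equiv.neg ℤ).tsum_eq fun n : ℤ => Real.exp (-π / A * ((n : ℝ) + x / η) ^ 2)]
    refine tsum_congr fun k => ?_
    congr 1
    have : ((Equiv.neg ℤ k : ℤ) : ℝ) = -(k : ℝ) := by simp
    rw [this, hA]
    field_simp
    ring
  -- the square root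
  have hsqrtA : Real.sqrt A = Real.sqrt (2 * π) * σ / η := by
    have h2 : A = (Real.sqrt (2 * π) * σ / η) ^ 2 := by
      rw [div_pow, mul_pow, Real.sq_sqrt (by positivity : (0:ℝ) ≤ 2 * π), hA]
    rw [h2, Real.sqrt_sq (by positivity)]
  have hcpow : ((A : ℂ)) ^ (1 / 2 : ℂ) = ((Real.sqrt (2 * π) * σ / η : ℝ) : ℂ) := by
    rw [show (1 / 2 : ℂ) = ((1 / 2 : ℝ) : ℂ) by norm_num,
      ← Complex.ofReal_cpow hA0.le, ← Real.sqrt_eq_rpow, hsqrtA]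
  -- the Gaussian sum
  have hgauss : η * (∑' k : ℤ, gauss σ 0 (x - k * η))
      = (η / (Real.sqrt (2 * π) * σ)) * ∑' k : ℤ, Real.exp (-(x - k * η) ^ 2 / (2 * σ ^ 2)) := by
    simp only [gauss, sub_zero]
    rw [tsum_mul_left]
    ring
  rw [hsum2, hreal] at jac
  rw [jac, hcpow, hgauss]
  have hs : (0 : ℝ) < Real.sqrt (2 * π) * σ / η := by
    have : (0 : ℝ) < Real.sqrt (2 * π) := Real.sqrt_pos.mpr (by positivity)
    positivity
  push_cast
  rw [div_mul_eq_mul_div, mul_comm]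
  field_simp
  simp_rw [mul_comm _ (η : ℂ)]

/-- the flatness factor of `ηℤ` equals the theta series of the dual
lattice minus one. -/
theorem stmt2 (η σ : ℝ) (hη : 0 < η) (hσ : 0 < σ) :
    flatness η σ
      = ∑' m : {m : ℤ // m ≠ 0},
          Real.exp (-(2 * π ^ 2 * σ ^ 2 * ((m : ℤ) : ℝ) ^ 2 / η ^ 2)) := by
  have hπ := Real.pi_pos
  set A : ℝ := 2 * π * σ ^ 2 / η ^ 2 with hA
  have hA0 : 0 < A := by positivity
  have hc0 : 0 < π * A := by positivity
  set E : ℤ → ℝ := fun n => Real.exp (-(π * A) * (n : ℝ) ^ 2) with hE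
  have hEsum : Summable E := by
    simpa [hE] using summable_exp_neg_c_int_sq hc0
  set S : ℝ := ∑' m : {m : ℤ // m ≠ 0}, E (m : ℤ) with hS
  have hRHS : (∑' m : {m : ℤ // m ≠ 0},
      Real.exp (-(2 * π ^ 2 * σ ^ 2 * ((m : ℤ) : ℝ) ^ 2 / η ^ 2))) = S := by
    refine tsum_congr fun m => ?_
    rw [hE]
    congr 1
    rw [hA]
    ring
  have hS0 : 0 ≤ S := tsum_nonneg fun m => (Real.exp_pos _).le
  set c : ℝ → ℤ → ℂ := fun x n =>
    -(π : ℂ) * ((A : ℝ) : ℂ) * (n : ℂ) ^ 2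
      + 2 * (π : ℂ) * (-Complex.I * ((x : ℂ) / (η : ℂ))) * (n : ℂ) with hc
  have habs : ∀ (x : ℝ) (n : ℤ), ‖Complex.exp (c x n)‖ = E n := by
    intro x n
    rw [Complex.norm_exp]
    have hcn : c x n = ((-(π * A) * (n : ℝ) ^ 2 : ℝ) : ℂ)
        + ((-(2 * π * x * (n : ℝ) / η) : ℝ) : ℂ) * Complex.I := by
      rw [hc]
      push_cast
      ring
    have hre : (((-(π * A) * (n : ℝ) ^ 2 : ℝ) : ℂ)
        + ((-(2 * π * x * (n : ℝ) / η) : ℝ) : ℂ) * Complex.I).re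
        = -(π * A) * (n : ℝ) ^ 2 := by
      rw [Complex.add_re, Complex.ofReal_re, Complex.mul_I_re, Complex.ofReal_im,
        neg_zero, add_zero]
    rw [hcn, hre, hE]
  have hcsum : ∀ x : ℝ, Summable fun n : ℤ => Complex.exp (c x n) := by
    intro x
    rw [← summable_norm_iff]
    simpa [habs x] using hEsum
  -- subtype sum as full sum with the 0 term removed
  have hsub : ∀ (f : ℤ → ℂ), (∑' m : {m : ℤ // m ≠ 0}, f (m : ℤ))
      = ∑' n : ℤ, if n = 0 then 0 else f n := by
    intro f
    rw [show (∑' m : {m : ℤ // m ≠ 0}, f (m : ℤ))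
        = ∑' m : ({m : ℤ | m ≠ 0} : Set ℤ), f (m : ℤ) from rfl, tsum_subtype]
    refine tsum_congr fun n => ?_
    by_cases h : n = 0 <;> simp [Set.indicator_apply, h]
  have key : ∀ x : ℝ, ((η * (∑' k : ℤ, gauss σ 0 (x - k * η)) - 1 : ℝ) : ℂ)
      = ∑' m : {m : ℤ // m ≠ 0}, Complex.exp (c x (m : ℤ)) := by
    intro x
    have h1 := key_id η σ hη hσ x
    have h2 : (∑' n : ℤ, Complex.exp (c x n)) = Complex.exp (c x 0)
        + ∑' n : ℤ, if n = 0 then 0 else Complex.exp (c x n) :=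
      (hcsum x).tsum_eq_add_tsum_ite 0
    have h3 : c x 0 = 0 := by rw [hc]; simp
    have h4 : (∑' n : ℤ, if n = 0 then 0 else Complex.exp (c x n))
        = (∑' n : ℤ, Complex.exp (c x n)) - 1 := by
      rw [h2, h3, Complex.exp_zero]; ring
    have h1' : ((η * (∑' k : ℤ, gauss σ 0 (x - k * η)) : ℝ) : ℂ)
        = ∑' n : ℤ, Complex.exp (c x n) := by
      simp only [hc]
      rw [hA]
      exact key_id η σ hη hσ x
    rw [hsub fun n => Complex.exp (c x n), h4, Complex.ofReal_sub,
      Complex.ofReal_one, h1']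
  -- the sup is bounded by S
  have bound : ∀ x : ℝ, |η * (∑' k : ℤ, gauss σ 0 (x - k * η)) - 1| ≤ S := by
    intro x
    have hnorm : Summable fun m : {m : ℤ // m ≠ 0} => ‖Complex.exp (c x (m : ℤ))‖ := by
      have : Summable fun m : {m : ℤ // m ≠ 0} => E (m : ℤ) :=
        hEsum.subtype {m : ℤ | m ≠ 0}
      simpa [habs x] using this
    calc |η * (∑' k : ℤ, gauss σ 0 (x - k * η)) - 1|
        = ‖((η * (∑' k : ℤ, gauss σ 0 (x - k * η)) - 1 : ℝ) : ℂ)‖ := by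
          rw [Complex.norm_real, Real.norm_eq_abs]
      _ = ‖∑' m : {m : ℤ // m ≠ 0}, Complex.exp (c x (m : ℤ))‖ := by rw [key x]
      _ ≤ ∑' m : {m : ℤ // m ≠ 0}, ‖Complex.exp (c x (m : ℤ))‖ := by
          simpa using norm_tsum_le_tsum_norm hnorm
      _ = S := by
          rw [hS]; exact tsum_congr fun m => habs x (m : ℤ)
  -- equality at 0
  have at0 : η * (∑' k : ℤ, gauss σ 0 (0 - k * η)) - 1 = S := by
    have hk := key 0
    have hterm0 : ∀ m : {m : ℤ // m ≠ 0},
        Complex.exp (c 0 (m : ℤ)) = ((E (m : ℤ) : ℝ) : ℂ) := by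
      intro m
      have : c 0 (m : ℤ) = ((-(π * A) * ((m : ℤ) : ℝ) ^ 2 : ℝ) : ℂ) := by
        rw [hc]; push_cast; ring
      rw [this]
      exact (Complex.ofReal_exp _).symm
    have : ((η * (∑' k : ℤ, gauss σ 0 (0 - k * η)) - 1 : ℝ) : ℂ) = ((S : ℝ) : ℂ) := by
      rw [hk, hS, Complex.ofReal_tsum]
      exact tsum_congr hterm0
    exact_mod_cast this
  rw [hRHS]
  unfold flatness
  apply le_antisymm
  · exact ciSup_le bound
  · have hb : BddAbove (Set.range fun x : ℝ =>
        |η * (∑' k : ℤ, gauss σ 0 (x - k * η)) - 1|) := by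
      refine ⟨S, ?_⟩
      rintro y ⟨x, rfl⟩
      exact bound x
    have := le_ciSup hb (0 : ℝ)
    rwa [at0, abs_of_nonneg hS0] at this
end

section
/- Let η > 0, σ > 0, c ∈ ℝ, and let X be a random variable distributed as the discrete Gaussian D_{ηℤ,σ,c}. If ε₁ := ε_{ηℤ}(σ·√((π − 1/e)/π)) satisfies ε₁ < 1, then |E[(X − c)²] − σ²| ≤ (2π·ε₁/(1 − ε₁))·σ². -/
open Real

/-- The probability mass that the discrete Gaussian `D_{ηℤ,σ,c}` assigns to the
lattice point `ηk`. -/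
noncomputable def discGaussPMF (η σ c : ℝ) (k : ℤ) : ℝ :=
  gauss σ c (η * k) / ∑' j : ℤ, gauss σ c (η * j)

noncomputable section

def F0 (η s : ℝ) (k : ℤ) (y : ℝ) : ℂ :=
  Complex.exp ((-(η * (k : ℝ) - y) ^ 2 / (2 * s ^ 2) : ℝ) : ℂ)

def G0 (η s : ℝ) (n : ℤ) (y : ℝ) : ℂ :=
  Complex.exp (((-(2 * π ^ 2 * s ^ 2 / η ^ 2) * (n : ℝ) ^ 2 : ℝ) : ℂ)
    + ((-(2 * π * (n : ℝ) / η) : ℝ) : ℂ) * Complex.I * (y : ℂ))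

lemma sq_expand (z w : ℂ) : (z + Complex.I * w) ^ 2 = z ^ 2 - w ^ 2 + 2 * Complex.I * w * z := by
  linear_combination w ^ 2 * Complex.I_sq

lemma poisson {η s : ℝ} (hη : 0 < η) (hs : 0 < s) (y : ℝ) :
    ∑' k : ℤ, F0 η s k y
      = ((Real.sqrt (2 * π) * s / η : ℝ) : ℂ) * ∑' n : ℤ, G0 η s n y := by
  have hπ : (0:ℝ) < π := Real.pi_pos
  have ha : (0:ℝ) < η ^ 2 / (2 * π * s ^ 2) := by positivity
  have ha' : 0 < (((η ^ 2 / (2 * π * s ^ 2) : ℝ) : ℂ)).re := by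
    rw [Complex.ofReal_re]; exact ha
  have key := Complex.tsum_exp_neg_quadratic ha' ((η * y / (2 * π * s ^ 2) : ℝ) : ℂ)
  have hsC : (s : ℂ) ≠ 0 := by exact_mod_cast hs.ne'
  have hηC : (η : ℂ) ≠ 0 := by exact_mod_cast hη.ne'
  have hπC : (π : ℂ) ≠ 0 := by exact_mod_cast hπ.ne'
  have hE : Complex.exp (((y ^ 2 / (2 * s ^ 2) : ℝ) : ℂ)) ≠ 0 := Complex.exp_ne_zero _
  have claim1 : ∀ k : ℤ,
      Complex.exp (-↑π * ((η ^ 2 / (2 * π * s ^ 2) : ℝ) : ℂ) * (k:ℂ) ^ 2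
        + 2 * ↑π * ((η * y / (2 * π * s ^ 2) : ℝ) : ℂ) * (k:ℂ))
      = Complex.exp (((y ^ 2 / (2 * s ^ 2) : ℝ) : ℂ)) * F0 η s k y := by
    intro k
    rw [F0, ← Complex.exp_add]
    congr 1
    push_cast
    field_simp
    ring
  have haC : ((η ^ 2 / (2 * π * s ^ 2) : ℝ) : ℂ) ≠ 0 := by
    rw [Complex.ofReal_ne_zero]; positivity
  have claim2 : ∀ n : ℤ,
      Complex.exp (-↑π / ((η ^ 2 / (2 * π * s ^ 2) : ℝ) : ℂ)
        * ((n:ℂ) + Complex.I * ((η * y / (2 * π * s ^ 2) : ℝ) : ℂ)) ^ 2)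
      = Complex.exp (((y ^ 2 / (2 * s ^ 2) : ℝ) : ℂ)) * G0 η s n y := by
    intro n
    rw [G0, ← Complex.exp_add]
    congr 1
    have hdiv : -(↑π:ℂ) / ((η ^ 2 / (2 * π * s ^ 2) : ℝ) : ℂ)
        = ((-(2 * π ^ 2 * s ^ 2 / η ^ 2) : ℝ) : ℂ) := by
      rw [div_eq_iff haC]
      push_cast
      field_simp
    have e1 : ∀ w : ℂ, ((n:ℂ) + Complex.I * w) ^ 2
        = (n:ℂ) ^ 2 - w ^ 2 + 2 * Complex.I * w * (n:ℂ) := fun w => by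
      linear_combination w ^ 2 * Complex.I_sq
    rw [e1, hdiv]
    have er : (((-(2 * π ^ 2 * s ^ 2 / η ^ 2) : ℝ)) : ℂ)
          * ((n:ℂ) ^ 2 - (((η * y / (2 * π * s ^ 2) : ℝ)) : ℂ) ^ 2)
        = ((y ^ 2 / (2 * s ^ 2) : ℝ) : ℂ)
          + ((-(2 * π ^ 2 * s ^ 2 / η ^ 2) * (n : ℝ) ^ 2 : ℝ) : ℂ) := by
      push_cast
      field_simp
      ring
    have ei : (((-(2 * π ^ 2 * s ^ 2 / η ^ 2) : ℝ)) : ℂ)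
          * (2 * (((η * y / (2 * π * s ^ 2) : ℝ)) : ℂ) * (n:ℂ))
        = ((-(2 * π * (n : ℝ) / η) : ℝ) : ℂ) * (y:ℂ) := by
      push_cast
      field_simp
    linear_combination er + Complex.I * ei
  -- prefactor computation
  have hpre : ((η ^ 2 / (2 * π * s ^ 2) : ℝ) : ℂ) ^ (1/2 : ℂ)
      = ((η / (Real.sqrt (2 * π) * s) : ℝ) : ℂ) := by
    rw [show ((1/2 : ℂ)) = ((1/2 : ℝ) : ℂ) by norm_num, ← Complex.ofReal_cpow ha.le]
    norm_cast
    rw [← Real.sqrt_eq_rpow,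
      show η ^ 2 / (2 * π * s ^ 2) = (η / (Real.sqrt (2 * π) * s)) ^ 2 by
        rw [div_pow, mul_pow, Real.sq_sqrt (by positivity)],
      Real.sqrt_sq (by positivity)]
  have hmul : Complex.exp (((y ^ 2 / (2 * s ^ 2) : ℝ) : ℂ)) * ∑' k : ℤ, F0 η s k y
      = Complex.exp (((y ^ 2 / (2 * s ^ 2) : ℝ) : ℂ))
        * (((Real.sqrt (2 * π) * s / η : ℝ) : ℂ) * ∑' n : ℤ, G0 η s n y) := by
    calc Complex.exp (((y ^ 2 / (2 * s ^ 2) : ℝ) : ℂ)) * ∑' k : ℤ, F0 η s k y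
        = ∑' k : ℤ, Complex.exp (((y ^ 2 / (2 * s ^ 2) : ℝ) : ℂ)) * F0 η s k y :=
          tsum_mul_left.symm
      _ = ∑' k : ℤ, Complex.exp (-↑π * ((η ^ 2 / (2 * π * s ^ 2) : ℝ) : ℂ) * (k:ℂ) ^ 2
            + 2 * ↑π * ((η * y / (2 * π * s ^ 2) : ℝ) : ℂ) * (k:ℂ)) :=
          tsum_congr fun k => (claim1 k).symm
      _ = 1 / ((η ^ 2 / (2 * π * s ^ 2) : ℝ) : ℂ) ^ (1/2 : ℂ)
            * ∑' n : ℤ, Complex.exp (-↑π / ((η ^ 2 / (2 * π * s ^ 2) : ℝ) : ℂ)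
              * ((n:ℂ) + Complex.I * ((η * y / (2 * π * s ^ 2) : ℝ) : ℂ)) ^ 2) := key
      _ = ((Real.sqrt (2 * π) * s / η : ℝ) : ℂ)
            * ∑' n : ℤ, Complex.exp (((y ^ 2 / (2 * s ^ 2) : ℝ) : ℂ)) * G0 η s n y := by
          rw [hpre, tsum_congr fun n => (claim2 n)]
          rw [one_div, ← Complex.ofReal_inv, inv_div]
      _ = Complex.exp (((y ^ 2 / (2 * s ^ 2) : ℝ) : ℂ))
            * (((Real.sqrt (2 * π) * s / η : ℝ) : ℂ) * ∑' n : ℤ, G0 η s n y) := by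
          rw [tsum_mul_left]; ring
  exact mul_left_cancel₀ hE hmul

/-- dual-side Gaussian weight -/
def Rterm (η s : ℝ) (n : ℤ) : ℝ := Real.exp (-(2 * π ^ 2 * s ^ 2 / η ^ 2) * (n : ℝ) ^ 2)

lemma sum_rterm_pow {η s : ℝ} (hη : 0 < η) (hs : 0 < s) (k : ℕ) :
    Summable (fun n : ℤ => |(n : ℝ)| ^ k * Rterm η s n) := by
  have hT : (0:ℝ) < 2 * π * s ^ 2 / η ^ 2 := by positivity
  have := summable_pow_mul_jacobiTheta₂_term_bound 0 hT k
  refine this.congr fun n => ?_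
  rw [Rterm]
  push_cast
  congr 2
  ring

/-- summable envelope for the Gaussian side -/
def vv (η σ d : ℝ) (k : ℤ) : ℝ :=
  Real.exp (-(η * |(k : ℝ)| - d) ^ 2 / (4 * σ ^ 2) + d ^ 2 / (2 * σ ^ 2))

lemma sum_vv {η σ : ℝ} (hη : 0 < η) (hσ : 0 < σ) (d : ℝ) : Summable (vv η σ d) := by
  have hT : (0:ℝ) < η ^ 2 / (4 * π * σ ^ 2) := by positivity
  have := (summable_pow_mul_jacobiTheta₂_term_bound (η * d / (4 * π * σ ^ 2)) hT 0).mul_left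
    (Real.exp (d ^ 2 / (4 * σ ^ 2)))
  refine this.congr fun n => ?_
  rw [vv]
  push_cast
  rw [pow_zero, one_mul, ← Real.exp_add]
  congr 1
  have hπ := Real.pi_pos.ne'
  field_simp
  linear_combination (η ^ 2 * 2) * (sq_abs ((n:ℝ)))

lemma exp_quarter_le_vv {η σ : ℝ} (hη : 0 < η) (hσ : 0 < σ) {c y : ℝ} (hy : |y - c| ≤ 1)
    (k : ℤ) :
    Real.exp (-(η * (k : ℝ) - y) ^ 2 / (4 * σ ^ 2)) ≤ vv η σ (|c| + 1) k := by
  set d : ℝ := |c| + 1 with hd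
  have hyd : |y| ≤ d := by
    have := abs_sub_abs_le_abs_sub y c
    rw [hd]; linarith
  have habs : |η * (k:ℝ)| = η * |(k:ℝ)| := by
    rw [abs_mul, abs_of_pos hη]
  have h1 : η * |(k:ℝ)| ≤ |η * (k:ℝ) - y| + d := by
    have := abs_sub_abs_le_abs_sub (η * (k:ℝ)) y
    rw [habs] at this; linarith
  have key : (η * |(k:ℝ)| - d) ^ 2 ≤ (η * (k:ℝ) - y) ^ 2 + 2 * d ^ 2 := by
    have hk0 : 0 ≤ η * |(k:ℝ)| := by positivity
    have hd0 : (0:ℝ) ≤ d := by rw [hd]; positivity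
    rcases le_or_gt d (η * |(k:ℝ)|) with h | h
    · have h2 : η * |(k:ℝ)| - d ≤ |η * (k:ℝ) - y| := by linarith
      have h3 : (η * |(k:ℝ)| - d) ^ 2 ≤ |η * (k:ℝ) - y| ^ 2 :=
        pow_le_pow_left₀ (by linarith) h2 2
      rw [sq_abs] at h3
      nlinarith [sq_nonneg d]
    · have h3 : (η * |(k:ℝ)| - d) ^ 2 ≤ d ^ 2 := by nlinarith
      nlinarith [sq_nonneg (η * (k:ℝ) - y)]
  rw [vv]
  apply Real.exp_le_exp.mpr
  have h4 : -(η * (k:ℝ) - y) ^ 2 ≤ -(η * |(k:ℝ)| - d) ^ 2 + 2 * d ^ 2 := by linarith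
  have h5 : (0:ℝ) < 4 * σ ^ 2 := by positivity
  calc -(η * (k:ℝ) - y) ^ 2 / (4 * σ ^ 2)
      ≤ (-(η * |(k:ℝ)| - d) ^ 2 + 2 * d ^ 2) / (4 * σ ^ 2) := by
        gcongr
    _ = -(η * |(k:ℝ)| - d) ^ 2 / (4 * σ ^ 2) + d ^ 2 / (2 * σ ^ 2) := by
        field_simp
        ring

lemma abs_mul_exp_quarter_le {σ : ℝ} (hσ : 0 < σ) (x : ℝ) :
    |x| * Real.exp (-x ^ 2 / (4 * σ ^ 2)) ≤ 2 * σ := by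
  have h1 : x ^ 2 / (2 * σ ^ 2) ≤ Real.exp (x ^ 2 / (2 * σ ^ 2)) := by
    linarith [Real.add_one_le_exp (x ^ 2 / (2 * σ ^ 2))]
  have h2 : x ^ 2 ≤ 2 * σ ^ 2 * Real.exp (x ^ 2 / (2 * σ ^ 2)) := by
    have h3 : (0:ℝ) < 2 * σ ^ 2 := by positivity
    calc x ^ 2 = 2 * σ ^ 2 * (x ^ 2 / (2 * σ ^ 2)) := by field_simp
      _ ≤ 2 * σ ^ 2 * Real.exp (x ^ 2 / (2 * σ ^ 2)) :=
          mul_le_mul_of_nonneg_left h1 h3.le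
  have hsq : (|x| * Real.exp (-x ^ 2 / (4 * σ ^ 2))) ^ 2 ≤ (2 * σ) ^ 2 := by
    have : (|x| * Real.exp (-x ^ 2 / (4 * σ ^ 2))) ^ 2
        = x ^ 2 * Real.exp (-x ^ 2 / (2 * σ ^ 2)) := by
      rw [mul_pow, sq_abs, pow_two (Real.exp _), ← Real.exp_add]
      congr 2
      ring
    rw [this]
    have h4 : (0:ℝ) < Real.exp (-x ^ 2 / (2 * σ ^ 2)) := Real.exp_pos _
    calc x ^ 2 * Real.exp (-x ^ 2 / (2 * σ ^ 2))
        ≤ 2 * σ ^ 2 * Real.exp (x ^ 2 / (2 * σ ^ 2)) * Real.exp (-x ^ 2 / (2 * σ ^ 2)) :=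
          mul_le_mul_of_nonneg_right h2 h4.le
      _ = 2 * σ ^ 2 := by
          rw [mul_assoc, ← Real.exp_add]
          ring_nf
          rw [Real.exp_zero]
          ring
      _ ≤ (2 * σ) ^ 2 := by nlinarith
  have := pow_le_pow_iff_left₀ (a := |x| * Real.exp (-x ^ 2 / (4 * σ ^ 2))) (b := 2 * σ)
    (by positivity) (by positivity) (two_ne_zero)
  exact this.mp hsq

lemma sq_mul_exp_quarter_le {σ : ℝ} (hσ : 0 < σ) (x : ℝ) :
    x ^ 2 * Real.exp (-x ^ 2 / (4 * σ ^ 2)) ≤ 4 * σ ^ 2 := by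
  have h1 : x ^ 2 / (4 * σ ^ 2) ≤ Real.exp (x ^ 2 / (4 * σ ^ 2)) := by
    linarith [Real.add_one_le_exp (x ^ 2 / (4 * σ ^ 2))]
  have h2 : x ^ 2 ≤ 4 * σ ^ 2 * Real.exp (x ^ 2 / (4 * σ ^ 2)) := by
    have h3 : (0:ℝ) < 4 * σ ^ 2 := by positivity
    calc x ^ 2 = 4 * σ ^ 2 * (x ^ 2 / (4 * σ ^ 2)) := by field_simp
      _ ≤ 4 * σ ^ 2 * Real.exp (x ^ 2 / (4 * σ ^ 2)) := by
          exact mul_le_mul_of_nonneg_left h1 (le_of_lt h3)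
  have h4 : (0:ℝ) < Real.exp (-x ^ 2 / (4 * σ ^ 2)) := Real.exp_pos _
  calc x ^ 2 * Real.exp (-x ^ 2 / (4 * σ ^ 2))
      ≤ 4 * σ ^ 2 * Real.exp (x ^ 2 / (4 * σ ^ 2)) * Real.exp (-x ^ 2 / (4 * σ ^ 2)) :=
        mul_le_mul_of_nonneg_right h2 h4.le
    _ = 4 * σ ^ 2 := by
        rw [mul_assoc, ← Real.exp_add]
        ring_nf
        rw [Real.exp_zero]
        ring

def F1 (η σ : ℝ) (k : ℤ) (y : ℝ) : ℂ :=
  F0 η σ k y * (((η * (k : ℝ) - y) / σ ^ 2 : ℝ) : ℂ)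

def F2 (η σ : ℝ) (k : ℤ) (y : ℝ) : ℂ :=
  F0 η σ k y * (((η * (k : ℝ) - y) ^ 2 / σ ^ 4 - 1 / σ ^ 2 : ℝ) : ℂ)

def G1 (η σ : ℝ) (n : ℤ) (y : ℝ) : ℂ :=
  G0 η σ n y * (((-(2 * π * (n : ℝ) / η) : ℝ) : ℂ) * Complex.I)

def G2 (η σ : ℝ) (n : ℤ) (y : ℝ) : ℂ :=
  G1 η σ n y * (((-(2 * π * (n : ℝ) / η) : ℝ) : ℂ) * Complex.I)

lemma hasDerivAt_F0 {η σ : ℝ} (hσ : 0 < σ) (k : ℤ) (y : ℝ) :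
    HasDerivAt (fun y => F0 η σ k y) (F1 η σ k y) y := by
  have h1 : HasDerivAt (fun y : ℝ => η * (k : ℝ) - y) (-1) y := (hasDerivAt_id y).const_sub _
  have hp : HasDerivAt (fun y : ℝ => -(η * (k : ℝ) - y) ^ 2 / (2 * σ ^ 2))
      ((η * (k : ℝ) - y) / σ ^ 2) y := by
    have h2 := (h1.pow 2).neg.div_const (2 * σ ^ 2)
    refine h2.congr_deriv ?_
    have : σ ≠ 0 := hσ.ne'
    push_cast
    ring
  exact (hp.ofReal_comp).cexp

lemma hasDerivAt_F1 {η σ : ℝ} (hσ : 0 < σ) (k : ℤ) (y : ℝ) :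
    HasDerivAt (fun y => F1 η σ k y) (F2 η σ k y) y := by
  have h1 : HasDerivAt (fun y : ℝ => η * (k : ℝ) - y) (-1) y := (hasDerivAt_id y).const_sub _
  have hq : HasDerivAt (fun y : ℝ => (η * (k : ℝ) - y) / σ ^ 2) (-1 / σ ^ 2) y :=
    h1.div_const _
  have h3 := (hasDerivAt_F0 (η := η) hσ k y).mul (hq.ofReal_comp)
  refine h3.congr_deriv ?_
  rw [F2, F1]
  push_cast
  ring

lemma hasDerivAt_G0 {η σ : ℝ} (n : ℤ) (y : ℝ) :
    HasDerivAt (fun y => G0 η σ n y) (G1 η σ n y) y := by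
  have hy : HasDerivAt (fun y : ℝ => ((y : ℝ) : ℂ)) 1 y := (hasDerivAt_id y).ofReal_comp
  have h1 : HasDerivAt (fun y : ℝ =>
      (((-(2 * π ^ 2 * σ ^ 2 / η ^ 2) * (n : ℝ) ^ 2 : ℝ) : ℂ)
        + ((-(2 * π * (n : ℝ) / η) : ℝ) : ℂ) * Complex.I * (y : ℂ)))
      ((((-(2 * π * (n : ℝ) / η) : ℝ) : ℂ) * Complex.I)) y := by
    have h2 := (hy.const_mul ((((-(2 * π * (n : ℝ) / η) : ℝ) : ℂ)) * Complex.I)).const_add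
      (((-(2 * π ^ 2 * σ ^ 2 / η ^ 2) * (n : ℝ) ^ 2 : ℝ) : ℂ))
    refine h2.congr_deriv ?_
    exact mul_one _
  exact h1.cexp

lemma hasDerivAt_G1 {η σ : ℝ} (n : ℤ) (y : ℝ) :
    HasDerivAt (fun y => G1 η σ n y) (G2 η σ n y) y :=
  (hasDerivAt_G0 n y).mul_const _

lemma norm_F0 {η σ : ℝ} (k : ℤ) (y : ℝ) :
    ‖F0 η σ k y‖ = Real.exp (-(η * (k : ℝ) - y) ^ 2 / (2 * σ ^ 2)) := by
  rw [F0, Complex.norm_exp, Complex.ofReal_re]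

lemma norm_G0 {η σ : ℝ} (n : ℤ) (y : ℝ) : ‖G0 η σ n y‖ = Rterm η σ n := by
  rw [G0, Complex.norm_exp, Rterm]
  congr 1
  have h0 : (((-(2 * π * (n:ℝ) / η) : ℝ) : ℂ) * Complex.I * (y:ℂ))
      = ((-(2 * π * (n:ℝ) / η) * y : ℝ) : ℂ) * Complex.I := by
    push_cast
    ring
  rw [h0, Complex.add_re, Complex.ofReal_re, Complex.mul_I_re, Complex.ofReal_im]
  ring

lemma norm_G1 {η σ : ℝ} (hη : 0 < η) (n : ℤ) (y : ℝ) :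
    ‖G1 η σ n y‖ = 2 * π / η * (|(n : ℝ)| * Rterm η σ n) := by
  rw [G1, norm_mul, norm_G0, norm_mul, Complex.norm_I, mul_one, Complex.norm_real,
    Real.norm_eq_abs, abs_neg, abs_div, abs_of_pos hη, abs_mul, abs_mul,
    abs_of_pos Real.pi_pos, abs_of_pos (by norm_num : (0:ℝ) < 2)]
  ring

lemma norm_G2 {η σ : ℝ} (hη : 0 < η) (n : ℤ) (y : ℝ) :
    ‖G2 η σ n y‖ = (2 * π / η) ^ 2 * (|(n : ℝ)| ^ 2 * Rterm η σ n) := by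
  rw [G2, norm_mul, norm_G1 hη, norm_mul, Complex.norm_I, mul_one, Complex.norm_real,
    Real.norm_eq_abs, abs_neg, abs_div, abs_of_pos hη, abs_mul, abs_mul,
    abs_of_pos Real.pi_pos, abs_of_pos (by norm_num : (0:ℝ) < 2)]
  ring

lemma norm_F1_le {η σ : ℝ} (hη : 0 < η) (hσ : 0 < σ) {c y : ℝ} (hy : |y - c| ≤ 1) (k : ℤ) :
    ‖F1 η σ k y‖ ≤ 2 / σ * vv η σ (|c| + 1) k := by
  have hr := abs_mul_exp_quarter_le hσ (η * (k : ℝ) - y)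
  have hv := exp_quarter_le_vv hη hσ hy k
  have hsplit : Real.exp (-(η * (k : ℝ) - y) ^ 2 / (2 * σ ^ 2))
      = Real.exp (-(η * (k : ℝ) - y) ^ 2 / (4 * σ ^ 2))
        * Real.exp (-(η * (k : ℝ) - y) ^ 2 / (4 * σ ^ 2)) := by
    rw [← Real.exp_add]
    congr 1
    have : σ ≠ 0 := hσ.ne'
    field_simp
    ring
  rw [F1, norm_mul, norm_F0, Complex.norm_real, Real.norm_eq_abs, hsplit, abs_div]
  rw [abs_of_pos (by positivity : (0:ℝ) < σ ^ 2)]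
  have hE1 : Real.exp (-(η * (k:ℝ) - y) ^ 2 / (4 * σ ^ 2)) ≤ vv η σ (|c| + 1) k := hv
  calc Real.exp (-(η * (k:ℝ) - y) ^ 2 / (4 * σ ^ 2))
          * Real.exp (-(η * (k:ℝ) - y) ^ 2 / (4 * σ ^ 2)) * (|η * (k:ℝ) - y| / σ ^ 2)
      = |η * (k:ℝ) - y| * Real.exp (-(η * (k:ℝ) - y) ^ 2 / (4 * σ ^ 2))
          * Real.exp (-(η * (k:ℝ) - y) ^ 2 / (4 * σ ^ 2)) / σ ^ 2 := by ring
    _ ≤ 2 * σ * vv η σ (|c| + 1) k / σ ^ 2 := by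
        gcongr
    _ = 2 / σ * vv η σ (|c| + 1) k := by
        have : σ ≠ 0 := hσ.ne'
        field_simp

lemma norm_F2_le {η σ : ℝ} (hη : 0 < η) (hσ : 0 < σ) {c y : ℝ} (hy : |y - c| ≤ 1) (k : ℤ) :
    ‖F2 η σ k y‖ ≤ 5 / σ ^ 2 * vv η σ (|c| + 1) k := by
  have hr := sq_mul_exp_quarter_le hσ (η * (k : ℝ) - y)
  have hv := exp_quarter_le_vv hη hσ hy k
  have hv' : Real.exp (-(η * (k : ℝ) - y) ^ 2 / (2 * σ ^ 2)) ≤ vv η σ (|c| + 1) k := by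
    refine le_trans (Real.exp_le_exp.mpr ?_) hv
    have h1 : (0:ℝ) ≤ (η * (k : ℝ) - y) ^ 2 := sq_nonneg _
    have h2 : (0:ℝ) < σ ^ 2 := by positivity
    rw [div_le_div_iff₀ (by positivity) (by positivity)]
    nlinarith
  have hsplit : Real.exp (-(η * (k : ℝ) - y) ^ 2 / (2 * σ ^ 2))
      = Real.exp (-(η * (k : ℝ) - y) ^ 2 / (4 * σ ^ 2))
        * Real.exp (-(η * (k : ℝ) - y) ^ 2 / (4 * σ ^ 2)) := by
    rw [← Real.exp_add]
    congr 1
    have : σ ≠ 0 := hσ.ne'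
    field_simp
    ring
  have hE0 : Real.exp (-(η * (k:ℝ) - y) ^ 2 / (4 * σ ^ 2)) ≤ 1 := by
    apply Real.exp_le_one_iff.mpr
    rw [neg_div]
    exact neg_nonpos.mpr (by positivity)
  rw [F2, norm_mul, norm_F0, Complex.norm_real, Real.norm_eq_abs]
  have habs : |(η * (k:ℝ) - y) ^ 2 / σ ^ 4 - 1 / σ ^ 2|
      ≤ (η * (k:ℝ) - y) ^ 2 / σ ^ 4 + 1 / σ ^ 2 := by
    refine (abs_sub _ _).trans ?_
    rw [abs_of_nonneg (by positivity), abs_of_nonneg (by positivity)]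
  calc Real.exp (-(η * (k:ℝ) - y) ^ 2 / (2 * σ ^ 2)) * |(η * (k:ℝ) - y) ^ 2 / σ ^ 4 - 1 / σ ^ 2|
      ≤ Real.exp (-(η * (k:ℝ) - y) ^ 2 / (2 * σ ^ 2))
          * ((η * (k:ℝ) - y) ^ 2 / σ ^ 4 + 1 / σ ^ 2) := by
        gcongr
    _ = ((η * (k:ℝ) - y) ^ 2 * Real.exp (-(η * (k:ℝ) - y) ^ 2 / (4 * σ ^ 2)))
          * Real.exp (-(η * (k:ℝ) - y) ^ 2 / (4 * σ ^ 2)) / σ ^ 4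
        + Real.exp (-(η * (k:ℝ) - y) ^ 2 / (4 * σ ^ 2))
          * Real.exp (-(η * (k:ℝ) - y) ^ 2 / (4 * σ ^ 2)) / σ ^ 2 := by
        rw [hsplit]
        ring
    _ ≤ 4 * σ ^ 2 * vv η σ (|c| + 1) k / σ ^ 4
        + 1 * vv η σ (|c| + 1) k / σ ^ 2 := by
        gcongr
    _ = 5 / σ ^ 2 * vv η σ (|c| + 1) k := by
        have : σ ≠ 0 := hσ.ne'
        field_simp
        ring

lemma norm_F0_le {η σ : ℝ} (hη : 0 < η) (hσ : 0 < σ) {c y : ℝ} (hy : |y - c| ≤ 1) (k : ℤ) :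
    ‖F0 η σ k y‖ ≤ vv η σ (|c| + 1) k := by
  rw [norm_F0]
  refine le_trans (Real.exp_le_exp.mpr ?_) (exp_quarter_le_vv hη hσ hy k)
  rw [div_le_div_iff₀ (by positivity) (by positivity)]
  nlinarith [sq_nonneg (η * (k:ℝ) - y), sq_nonneg σ, sq_nonneg (σ^2)]

lemma sum_Rterm {η σ : ℝ} (hη : 0 < η) (hσ : 0 < σ) : Summable (Rterm η σ) := by
  refine (sum_rterm_pow hη hσ 0).congr fun n => ?_
  rw [pow_zero, one_mul]

lemma sum_absRterm {η σ : ℝ} (hη : 0 < η) (hσ : 0 < σ) :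
    Summable (fun n : ℤ => |(n:ℝ)| * Rterm η σ n) := by
  refine (sum_rterm_pow hη hσ 1).congr fun n => ?_
  rw [pow_one]

lemma sumG0 {η σ : ℝ} (hη : 0 < η) (hσ : 0 < σ) (y : ℝ) :
    Summable (fun n : ℤ => G0 η σ n y) :=
  Summable.of_norm_bounded (sum_Rterm hη hσ) (fun n => le_of_eq (norm_G0 n y))

lemma sumG1 {η σ : ℝ} (hη : 0 < η) (hσ : 0 < σ) (y : ℝ) :
    Summable (fun n : ℤ => G1 η σ n y) :=
  Summable.of_norm_bounded ((sum_absRterm hη hσ).mul_left (2 * π / η))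
    (fun n => le_of_eq (norm_G1 hη n y))

lemma sumF0 {η σ : ℝ} (hη : 0 < η) (hσ : 0 < σ) {c y : ℝ} (hy : |y - c| ≤ 1) :
    Summable (fun k : ℤ => F0 η σ k y) :=
  Summable.of_norm_bounded (sum_vv hη hσ (|c| + 1)) (fun k => norm_F0_le hη hσ hy k)

lemma sumF1 {η σ : ℝ} (hη : 0 < η) (hσ : 0 < σ) {c y : ℝ} (hy : |y - c| ≤ 1) :
    Summable (fun k : ℤ => F1 η σ k y) :=
  Summable.of_norm_bounded ((sum_vv hη hσ (|c| + 1)).mul_left (2 / σ))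
    (fun k => norm_F1_le hη hσ hy k)

lemma sumF2 {η σ : ℝ} (hη : 0 < η) (hσ : 0 < σ) {c y : ℝ} (hy : |y - c| ≤ 1) :
    Summable (fun k : ℤ => F2 η σ k y) :=
  Summable.of_norm_bounded ((sum_vv hη hσ (|c| + 1)).mul_left (5 / σ ^ 2))
    (fun k => norm_F2_le hη hσ hy k)

lemma deriv_chain {η σ : ℝ} (hη : 0 < η) (hσ : 0 < σ) (c : ℝ) :
    ∑' k : ℤ, F2 η σ k c = ((Real.sqrt (2 * π) * σ / η : ℝ) : ℂ) * ∑' n : ℤ, G2 η σ n c := by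
  set K := ((Real.sqrt (2 * π) * σ / η : ℝ) : ℂ) with hK
  have hball : IsOpen (Metric.ball c (1:ℝ)) := Metric.isOpen_ball
  have hprec : IsPreconnected (Metric.ball c (1:ℝ)) := (convex_ball c (1:ℝ)).isPreconnected
  have hmem : c ∈ Metric.ball c (1:ℝ) := Metric.mem_ball_self one_pos
  have hdist : ∀ y ∈ Metric.ball c (1:ℝ), |y - c| ≤ 1 := fun y hy =>
    le_of_lt (by rwa [Metric.mem_ball, Real.dist_eq] at hy)
  have hcc : |c - c| ≤ (1:ℝ) := by simp
  have sumAbs2 : Summable (fun n : ℤ => (2 * π / η) ^ 2 * (|(n:ℝ)| ^ 2 * Rterm η σ n)) :=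
    (sum_rterm_pow hη hσ 2).mul_left _
  have hDF : ∀ y ∈ Metric.ball c (1:ℝ),
      HasDerivAt (fun y => ∑' k : ℤ, F0 η σ k y) (∑' k : ℤ, F1 η σ k y) y := fun y hy =>
    hasDerivAt_tsum_of_isPreconnected ((sum_vv hη hσ (|c| + 1)).mul_left (2 / σ)) hball hprec
      (fun k y _ => hasDerivAt_F0 hσ k y) (fun k y hy => norm_F1_le hη hσ (hdist y hy) k)
      hmem (sumF0 hη hσ hcc) hy
  have hDG : ∀ y ∈ Metric.ball c (1:ℝ),
      HasDerivAt (fun y => ∑' n : ℤ, G0 η σ n y) (∑' n : ℤ, G1 η σ n y) y := fun y hy =>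
    hasDerivAt_tsum_of_isPreconnected ((sum_absRterm hη hσ).mul_left (2 * π / η)) hball hprec
      (fun n y _ => hasDerivAt_G0 n y) (fun n y _ => le_of_eq (norm_G1 hη n y))
      hmem (sumG0 hη hσ c) hy
  have funeq : (fun y => ∑' k : ℤ, F0 η σ k y) = (fun y => K * ∑' n : ℤ, G0 η σ n y) :=
    funext fun y => poisson hη hσ y
  have eq1 : ∀ y ∈ Metric.ball c (1:ℝ), ∑' k : ℤ, F1 η σ k y = K * ∑' n : ℤ, G1 η σ n y := by
    intro y hy
    have h1 := hDF y hy
    rw [funeq] at h1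
    exact h1.unique ((hDG y hy).const_mul K)
  have hDF2 : HasDerivAt (fun y => ∑' k : ℤ, F1 η σ k y) (∑' k : ℤ, F2 η σ k c) c :=
    hasDerivAt_tsum_of_isPreconnected ((sum_vv hη hσ (|c| + 1)).mul_left (5 / σ ^ 2)) hball hprec
      (fun k y _ => hasDerivAt_F1 hσ k y) (fun k y hy => norm_F2_le hη hσ (hdist y hy) k)
      hmem (sumF1 hη hσ hcc) hmem
  have hDG2 : HasDerivAt (fun y => K * ∑' n : ℤ, G1 η σ n y) (K * ∑' n : ℤ, G2 η σ n c) c :=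
    (hasDerivAt_tsum_of_isPreconnected sumAbs2 hball hprec
      (fun n y _ => hasDerivAt_G1 n y) (fun n y _ => le_of_eq (norm_G2 hη n y))
      hmem (sumG1 hη hσ c) hmem).const_mul K
  have heq : (fun y => ∑' k : ℤ, F1 η σ k y) =ᶠ[nhds c] (fun y => K * ∑' n : ℤ, G1 η σ n y) :=
    Filter.eventuallyEq_of_mem (hball.mem_nhds hmem) eq1
  exact hDF2.unique (hDG2.congr_of_eventuallyEq heq)

def Teps (η s : ℝ) : ℝ := ∑' n : ℤ, if n = 0 then 0 else Rterm η s n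

lemma TepsTerm_nonneg (η s : ℝ) (n : ℤ) : 0 ≤ (if n = 0 then 0 else Rterm η s n) := by
  by_cases h : n = 0 <;> simp [h, Rterm, (Real.exp_pos _).le]

lemma TepsTerm_le (η s : ℝ) (n : ℤ) : (if n = 0 then 0 else Rterm η s n) ≤ Rterm η s n := by
  by_cases h : n = 0 <;> simp [h, Rterm, (Real.exp_pos _).le]

lemma Teps_nonneg (η s : ℝ) : 0 ≤ Teps η s := tsum_nonneg (TepsTerm_nonneg η s)

lemma sum_TepsTerm {η s : ℝ} (hη : 0 < η) (hs : 0 < s) :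
    Summable (fun n : ℤ => if n = 0 then 0 else Rterm η s n) :=
  Summable.of_nonneg_of_le (TepsTerm_nonneg η s) (TepsTerm_le η s) (sum_Rterm hη hs)

lemma G0_zero (η s : ℝ) (x : ℝ) : G0 η s 0 x = 1 := by
  rw [G0]
  push_cast
  simp

lemma G0_ofReal (η s : ℝ) (n : ℤ) : G0 η s n 0 = ((Rterm η s n : ℝ) : ℂ) := by
  rw [G0, Rterm, Complex.ofReal_zero, mul_zero, add_zero, Complex.ofReal_exp]

lemma coe_sum_eq {η s : ℝ} (hη : 0 < η) (hs : 0 < s) (x : ℝ) :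
    ((∑' k : ℤ, Real.exp (-(η * (k:ℝ) - x) ^ 2 / (2 * s ^ 2)) : ℝ) : ℂ)
      = ((Real.sqrt (2 * π) * s / η : ℝ) : ℂ) * ∑' n : ℤ, G0 η s n x := by
  rw [Complex.ofReal_tsum]
  exact (tsum_congr fun k => Complex.ofReal_exp _).trans (poisson hη hs x)

lemma gauss_sum_complex {η s : ℝ} (hη : 0 < η) (hs : 0 < s) (x : ℝ) :
    ((η * (∑' k : ℤ, gauss s 0 (x - k * η)) : ℝ) : ℂ) = ∑' n : ℤ, G0 η s n x := by
  have hsq : Real.sqrt (2 * π) ≠ 0 := by positivity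
  have h1 : ∀ k : ℤ, gauss s 0 (x - k * η)
      = 1 / (Real.sqrt (2 * π) * s) * Real.exp (-(η * (k:ℝ) - x) ^ 2 / (2 * s ^ 2)) := by
    intro k
    rw [gauss]
    congr 1
    congr 1
    ring
  rw [tsum_congr h1, tsum_mul_left,
    show η * (1 / (Real.sqrt (2 * π) * s)
        * ∑' k : ℤ, Real.exp (-(η * (k:ℝ) - x) ^ 2 / (2 * s ^ 2)))
      = (η / (Real.sqrt (2 * π) * s))
        * ∑' k : ℤ, Real.exp (-(η * (k:ℝ) - x) ^ 2 / (2 * s ^ 2)) from by ring,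
    Complex.ofReal_mul, coe_sum_eq hη hs x, ← mul_assoc, ← Complex.ofReal_mul,
    show η / (Real.sqrt (2 * π) * s) * (Real.sqrt (2 * π) * s / η) = 1 from by
      field_simp,
    Complex.ofReal_one, one_mul]

lemma flatness_aux {η s : ℝ} (hη : 0 < η) (hs : 0 < s) :
    (⨆ x : ℝ, |η * (∑' k : ℤ, gauss s 0 (x - k * η)) - 1|) = Teps η s := by
  have hsplit : ∀ x : ℝ, ((η * (∑' k : ℤ, gauss s 0 (x - k * η)) - 1 : ℝ) : ℂ)
      = ∑' n : ℤ, (if n = 0 then 0 else G0 η s n x) := by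
    intro x
    rw [Complex.ofReal_sub, Complex.ofReal_one, gauss_sum_complex hη hs x,
      (sumG0 hη hs x).tsum_eq_add_tsum_ite 0, G0_zero]
    ring
  have hnorm : ∀ x : ℝ, |η * (∑' k : ℤ, gauss s 0 (x - k * η)) - 1| ≤ Teps η s := by
    intro x
    have h2 : ‖(((η * (∑' k : ℤ, gauss s 0 (x - k * η)) - 1 : ℝ)) : ℂ)‖ ≤ Teps η s := by
      rw [hsplit x]
      refine (norm_tsum_le_tsum_norm ?_).trans ?_
      · refine (sum_TepsTerm hη hs).congr fun n => ?_
        by_cases h : n = 0 <;> simp [h, norm_G0]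
      · refine le_of_eq (tsum_congr fun n => ?_)
        by_cases h : n = 0 <;> simp [h, norm_G0]
    rwa [Complex.norm_real, Real.norm_eq_abs] at h2
  have hzero : η * (∑' k : ℤ, gauss s 0 ((0:ℝ) - k * η)) - 1 = Teps η s := by
    have h5 := hsplit 0
    have h3 : ∑' n : ℤ, (if n = 0 then 0 else G0 η s n 0) = ((Teps η s : ℝ) : ℂ) := by
      rw [Teps, Complex.ofReal_tsum]
      refine tsum_congr fun n => ?_
      by_cases h : n = 0
      · simp [h]
      · simp only [h, if_false, G0_ofReal]
    exact_mod_cast h5.trans h3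
  refine le_antisymm (ciSup_le hnorm) ?_
  have hbdd : BddAbove (Set.range fun x => |η * (∑' k : ℤ, gauss s 0 (x - k * η)) - 1|) :=
    ⟨Teps η s, fun z hz => by obtain ⟨x, rfl⟩ := hz; exact hnorm x⟩
  have h4 := le_ciSup hbdd (0:ℝ)
  calc Teps η s = |η * (∑' k : ℤ, gauss s 0 ((0:ℝ) - k * η)) - 1| := by
        rw [hzero, abs_of_nonneg (Teps_nonneg _ _)]
    _ ≤ _ := h4

lemma sum_realGauss {η σ : ℝ} (hη : 0 < η) (hσ : 0 < σ) (c : ℝ) :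
    Summable (fun k : ℤ => Real.exp (-(η * (k:ℝ) - c) ^ 2 / (2 * σ ^ 2))) := by
  refine Summable.of_nonneg_of_le (fun k => (Real.exp_pos _).le) (fun k => ?_)
    (sum_vv hη hσ (|c| + 1))
  have h := norm_F0_le hη hσ (show |c - c| ≤ 1 by simp) k
  rwa [norm_F0] at h

lemma sum_realGauss_sq {η σ : ℝ} (hη : 0 < η) (hσ : 0 < σ) (c : ℝ) :
    Summable (fun k : ℤ =>
      (η * (k:ℝ) - c) ^ 2 * Real.exp (-(η * (k:ℝ) - c) ^ 2 / (2 * σ ^ 2))) := by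
  refine Summable.of_nonneg_of_le (fun k => by positivity) (fun k => ?_)
    ((sum_vv hη hσ (|c| + 1)).mul_left (4 * σ ^ 2))
  have hsplit : Real.exp (-(η * (k : ℝ) - c) ^ 2 / (2 * σ ^ 2))
      = Real.exp (-(η * (k : ℝ) - c) ^ 2 / (4 * σ ^ 2))
        * Real.exp (-(η * (k : ℝ) - c) ^ 2 / (4 * σ ^ 2)) := by
    rw [← Real.exp_add]
    congr 1
    have : σ ≠ 0 := hσ.ne'
    field_simp
    ring
  rw [hsplit]
  calc (η * (k:ℝ) - c) ^ 2 * (Real.exp (-(η * (k:ℝ) - c) ^ 2 / (4 * σ ^ 2))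
          * Real.exp (-(η * (k:ℝ) - c) ^ 2 / (4 * σ ^ 2)))
      = ((η * (k:ℝ) - c) ^ 2 * Real.exp (-(η * (k:ℝ) - c) ^ 2 / (4 * σ ^ 2)))
          * Real.exp (-(η * (k:ℝ) - c) ^ 2 / (4 * σ ^ 2)) := by ring
    _ ≤ (4 * σ ^ 2) * vv η σ (|c| + 1) k := by
        have h1 := sq_mul_exp_quarter_le hσ (η * (k:ℝ) - c)
        have h2 := exp_quarter_le_vv hη hσ (show |c - c| ≤ 1 by simp) k
        exact mul_le_mul h1 h2 (Real.exp_pos _).le (by positivity)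

/-- second moment of the discrete Gaussian `D_{ηℤ,σ,c}` about its
center `c` is within a factor controlled by the flatness factor from `σ²`. -/
theorem stmt4 (η σ c : ℝ) (hη : 0 < η) (hσ : 0 < σ)
    (ε₁ : ℝ) (hε₁ : ε₁ = flatness η (σ * Real.sqrt ((π - 1 / Real.exp 1) / π)))
    (hε₁lt : ε₁ < 1) :
    |(∑' k : ℤ, discGaussPMF η σ c k * (η * k - c) ^ 2) - σ ^ 2|
      ≤ (2 * π * ε₁ / (1 - ε₁)) * σ ^ 2 := by
  have hπ : (0:ℝ) < π := Real.pi_pos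
  have hexp1 : (1:ℝ) < Real.exp 1 := by
    have := Real.add_one_le_exp 1
    linarith
  have hexp0 : (0:ℝ) < Real.exp 1 := Real.exp_pos 1
  have hfrac_pos : 0 < (π - 1 / Real.exp 1) / π := by
    apply div_pos ?_ hπ
    have h1 : 1 / Real.exp 1 < 1 := by
      rw [div_lt_one hexp0]
      exact hexp1
    have := Real.pi_gt_three
    linarith
  set st := σ * Real.sqrt ((π - 1 / Real.exp 1) / π) with hst_def
  have hst : 0 < st := mul_pos hσ (Real.sqrt_pos.mpr hfrac_pos)
  have hst_le : st ≤ σ := by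
    rw [hst_def]
    nth_rewrite 2 [← mul_one σ]
    apply mul_le_mul_of_nonneg_left ?_ hσ.le
    apply Real.sqrt_le_one.mpr
    rw [div_le_one hπ]
    have : 0 < 1 / Real.exp 1 := by positivity
    linarith
  have hst_sq : st ^ 2 = σ ^ 2 * ((π - 1 / Real.exp 1) / π) := by
    rw [hst_def, mul_pow, Real.sq_sqrt hfrac_pos.le]
  have hcc : |c - c| ≤ (1:ℝ) := by simp
  set Dsum := ∑' k : ℤ, Real.exp (-(η * (k:ℝ) - c) ^ 2 / (2 * σ ^ 2)) with hDsum_def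
  set Nsum := ∑' k : ℤ,
    (η * (k:ℝ) - c) ^ 2 * Real.exp (-(η * (k:ℝ) - c) ^ 2 / (2 * σ ^ 2)) with hNsum_def
  set Kr := Real.sqrt (2 * π) * σ / η with hKr_def
  have hKr : 0 < Kr := by rw [hKr_def]; positivity
  have sumD := sum_realGauss hη hσ c
  have sumN := sum_realGauss_sq hη hσ c
  have hε₁T : ε₁ = Teps η st := by
    rw [hε₁]
    rw [flatness]
    exact flatness_aux hη hst
  have hε₁0 : 0 ≤ ε₁ := hε₁T ▸ Teps_nonneg η st
  have h1ε : 0 < 1 - ε₁ := by linarith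
  have hRle : ∀ n : ℤ, Rterm η σ n ≤ Rterm η st n := by
    intro n
    rw [Rterm, Rterm]
    apply Real.exp_le_exp.mpr
    have h1 : st ^ 2 ≤ σ ^ 2 := pow_le_pow_left₀ hst.le hst_le 2
    have h4 : 2 * π ^ 2 * st ^ 2 / η ^ 2 ≤ 2 * π ^ 2 * σ ^ 2 / η ^ 2 := by gcongr
    nlinarith [sq_nonneg ((n:ℝ))]
  have hTle : Teps η σ ≤ ε₁ := by
    rw [hε₁T, Teps, Teps]
    refine Summable.tsum_le_tsum (fun n => ?_) (sum_TepsTerm hη hσ) (sum_TepsTerm hη hst)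
    by_cases h : n = 0 <;> simp [h, hRle n]
  -- lower bound for Dsum
  have hDC : ((Dsum : ℝ) : ℂ) = ((Kr : ℝ) : ℂ) * ∑' n : ℤ, G0 η σ n c := coe_sum_eq hη hσ c
  have hZ : ((Dsum - Kr : ℝ) : ℂ)
      = ((Kr : ℝ) : ℂ) * ∑' n : ℤ, (if n = 0 then 0 else G0 η σ n c) := by
    rw [Complex.ofReal_sub, hDC, (sumG0 hη hσ c).tsum_eq_add_tsum_ite 0, G0_zero]
    ring
  have hDdist : |Dsum - Kr| ≤ Kr * ε₁ := by
    have h2 : ‖((Dsum - Kr : ℝ) : ℂ)‖ ≤ Kr * ε₁ := by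
      rw [hZ, norm_mul, Complex.norm_real, Real.norm_eq_abs, abs_of_pos hKr]
      apply mul_le_mul_of_nonneg_left ?_ hKr.le
      refine le_trans (norm_tsum_le_tsum_norm ?_) ?_
      · refine (sum_TepsTerm hη hσ).congr fun n => ?_
        by_cases h : n = 0 <;> simp [h, norm_G0]
      · refine le_trans (le_of_eq (tsum_congr fun n => ?_)) hTle
        by_cases h : n = 0 <;> simp [h, norm_G0]
    rwa [Complex.norm_real, Real.norm_eq_abs] at h2
  have hDlow : Kr * (1 - ε₁) ≤ Dsum := by
    have h5 := (abs_le.mp hDdist).1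
    nlinarith
  have hD0 : 0 < Dsum := lt_of_lt_of_le (by positivity) hDlow
  -- the second-moment identity
  have sumM : Summable (fun k : ℤ => Real.exp (-(η * (k:ℝ) - c) ^ 2 / (2 * σ ^ 2))
      * ((η * (k:ℝ) - c) ^ 2 / σ ^ 4 - 1 / σ ^ 2)) := by
    refine Summable.of_norm_bounded ((sum_vv hη hσ (|c| + 1)).mul_left (5 / σ ^ 2))
      fun k => ?_
    have h := norm_F2_le hη hσ hcc k
    rw [F2, norm_mul, norm_F0, Complex.norm_real, Real.norm_eq_abs] at h
    rwa [Real.norm_eq_abs, abs_mul, abs_of_pos (Real.exp_pos _)]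
  set M := ∑' k : ℤ, Real.exp (-(η * (k:ℝ) - c) ^ 2 / (2 * σ ^ 2))
    * ((η * (k:ℝ) - c) ^ 2 / σ ^ 4 - 1 / σ ^ 2) with hM_def
  have hMC : ((M : ℝ) : ℂ) = ∑' k : ℤ, F2 η σ k c := by
    rw [hM_def, Complex.ofReal_tsum]
    refine tsum_congr fun k => ?_
    rw [F2, F0, Complex.ofReal_mul, Complex.ofReal_exp]
  have hMabs : |M| ≤ Kr * ∑' n : ℤ, (2 * π / η) ^ 2 * (|(n:ℝ)| ^ 2 * Rterm η σ n) := by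
    have h2 : ‖((M : ℝ) : ℂ)‖
        ≤ Kr * ∑' n : ℤ, (2 * π / η) ^ 2 * (|(n:ℝ)| ^ 2 * Rterm η σ n) := by
      rw [hMC, deriv_chain hη hσ c, norm_mul, Complex.norm_real, Real.norm_eq_abs,
        abs_of_pos hKr]
      apply mul_le_mul_of_nonneg_left ?_ hKr.le
      refine le_trans (norm_tsum_le_tsum_norm ?_)
        (le_of_eq (tsum_congr fun n => norm_G2 hη n c))
      exact ((sum_rterm_pow hη hσ 2).mul_left ((2 * π / η) ^ 2)).congr
        fun n => (norm_G2 hη n c).symm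
    rwa [Complex.norm_real, Real.norm_eq_abs] at h2
  have hkey : ∀ n : ℤ, σ ^ 4 * ((2 * π / η) ^ 2 * (|(n:ℝ)| ^ 2 * Rterm η σ n))
      ≤ 2 * π * σ ^ 2 * (if n = 0 then 0 else Rterm η st n) := by
    intro n
    by_cases h : n = 0
    · simp [h]
    · rw [if_neg h]
      set t := 2 * π ^ 2 * σ ^ 2 * (n:ℝ) ^ 2 / η ^ 2 with ht_def
      have ht0 : 0 ≤ t := by rw [ht_def]; positivity
      set u := t / (Real.exp 1 * π) with hu_def
      have hu0 : 0 ≤ u := by rw [hu_def]; positivity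
      have hue : Real.exp 1 * u ≤ Real.exp u := by
        have h8 := Real.add_one_le_exp (u - 1)
        have h9 : Real.exp u = Real.exp 1 * Real.exp (u - 1) := by
          rw [← Real.exp_add]
          ring_nf
        rw [h9]
        have : u ≤ Real.exp (u - 1) := by linarith
        exact mul_le_mul_of_nonneg_left this hexp0.le
      have ht : t ≤ π * Real.exp u := by
        have h10 : t = π * (Real.exp 1 * u) := by
          rw [hu_def]
          field_simp
        rw [h10]
        exact mul_le_mul_of_nonneg_left hue hπ.le
      have hL : σ ^ 4 * ((2 * π / η) ^ 2 * (|(n:ℝ)| ^ 2 * Rterm η σ n))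
          = 2 * σ ^ 2 * (t * Real.exp (-t)) := by
        rw [Rterm, sq_abs, ht_def]
        have hη2 : η ≠ 0 := hη.ne'
        rw [show -(2 * π ^ 2 * σ ^ 2 / η ^ 2) * (n:ℝ) ^ 2
            = -(2 * π ^ 2 * σ ^ 2 * (n:ℝ) ^ 2 / η ^ 2) from by ring]
        field_simp
      have hR : Rterm η st n = Real.exp (u - t) := by
        rw [Rterm]
        congr 1
        rw [hst_sq, hu_def, ht_def]
        field_simp
        ring
      rw [hL, hR]
      have h11 : t * Real.exp (-t) ≤ π * Real.exp (u - t) := by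
        calc t * Real.exp (-t) ≤ π * Real.exp u * Real.exp (-t) :=
              mul_le_mul_of_nonneg_right ht (Real.exp_pos _).le
          _ = π * Real.exp (u - t) := by
              rw [mul_assoc, ← Real.exp_add]
              ring_nf
      calc 2 * σ ^ 2 * (t * Real.exp (-t))
          ≤ 2 * σ ^ 2 * (π * Real.exp (u - t)) :=
            mul_le_mul_of_nonneg_left h11 (by positivity)
        _ = 2 * π * σ ^ 2 * Real.exp (u - t) := by ring
  have hsum_le : σ ^ 4 * ∑' n : ℤ, (2 * π / η) ^ 2 * (|(n:ℝ)| ^ 2 * Rterm η σ n)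
      ≤ 2 * π * σ ^ 2 * ε₁ := by
    rw [← tsum_mul_left, hε₁T, Teps, ← tsum_mul_left]
    exact Summable.tsum_le_tsum hkey
      (((sum_rterm_pow hη hσ 2).mul_left ((2 * π / η) ^ 2)).mul_left (σ ^ 4))
      ((sum_TepsTerm hη hst).mul_left (2 * π * σ ^ 2))
  have hND : Nsum - σ ^ 2 * Dsum = σ ^ 4 * M := by
    rw [hNsum_def, hM_def, hDsum_def]
    rw [← tsum_mul_left, ← tsum_mul_left]
    rw [← Summable.tsum_sub sumN (sumD.mul_left (σ ^ 2))]
    refine tsum_congr fun k => ?_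
    have : σ ≠ 0 := hσ.ne'
    field_simp
  have hNDabs : |Nsum - σ ^ 2 * Dsum| ≤ Kr * (2 * π * σ ^ 2 * ε₁) := by
    rw [hND, abs_mul, abs_of_pos (by positivity : (0:ℝ) < σ ^ 4)]
    calc σ ^ 4 * |M|
        ≤ σ ^ 4 * (Kr * ∑' n : ℤ, (2 * π / η) ^ 2 * (|(n:ℝ)| ^ 2 * Rterm η σ n)) :=
          mul_le_mul_of_nonneg_left hMabs (by positivity)
      _ = Kr * (σ ^ 4 * ∑' n : ℤ, (2 * π / η) ^ 2 * (|(n:ℝ)| ^ 2 * Rterm η σ n)) := by ring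
      _ ≤ Kr * (2 * π * σ ^ 2 * ε₁) := mul_le_mul_of_nonneg_left hsum_le hKr.le
  -- expected value
  have hgauss_term : ∀ k : ℤ, gauss σ c (η * k)
      = 1 / (Real.sqrt (2 * π) * σ) * Real.exp (-(η * (k:ℝ) - c) ^ 2 / (2 * σ ^ 2)) :=
    fun k => rfl
  have hcst : (0:ℝ) < 1 / (Real.sqrt (2 * π) * σ) := by positivity
  have hDg : (∑' j : ℤ, gauss σ c (η * j)) = 1 / (Real.sqrt (2 * π) * σ) * Dsum := by
    rw [hDsum_def, tsum_congr hgauss_term]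
    exact tsum_mul_left
  have hE : (∑' k : ℤ, discGaussPMF η σ c k * (η * k - c) ^ 2) = Nsum / Dsum := by
    have h6 : ∀ k : ℤ, discGaussPMF η σ c k * (η * k - c) ^ 2
        = ((η * (k:ℝ) - c) ^ 2 * Real.exp (-(η * (k:ℝ) - c) ^ 2 / (2 * σ ^ 2))) / Dsum := by
      intro k
      rw [discGaussPMF, hDg, hgauss_term k, mul_div_mul_left _ _ hcst.ne']
      ring
    rw [tsum_congr h6, tsum_div_const, hNsum_def]
  rw [hE]
  have h7 : Nsum / Dsum - σ ^ 2 = (Nsum - σ ^ 2 * Dsum) / Dsum := by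
    field_simp
  rw [h7, abs_div, abs_of_pos hD0]
  calc |Nsum - σ ^ 2 * Dsum| / Dsum
      ≤ (Kr * (2 * π * σ ^ 2 * ε₁)) / (Kr * (1 - ε₁)) :=
        div_le_div₀ (by positivity) hNDabs (by positivity) hDlow
    _ = 2 * π * σ ^ 2 * ε₁ / (1 - ε₁) := by
        rw [mul_div_mul_left _ _ hKr.ne']
    _ = 2 * π * ε₁ / (1 - ε₁) * σ ^ 2 := by ring

end
end
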